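/- arXiv:1706.08345 — 2 statements merged into one kernel-verified Lean document; each statement's English description precedes it below -/
import Mathlib

section
/- Fix an integer n ≥ 1 and a real number ν. Let uᵢ, vᵢ, wᵢ : ℝ³ → ℝ for 0 ≤ i ≤ n−1, and p_{n−1}, f_{1,n−1}, f_{2,n−1}, f_{3,n−1} : ℝ³ → ℝ all be smooth (C^∞), and suppose each level-i coefficient triple is divergence-free: ∂uᵢ/∂x + ∂vᵢ/∂y + ∂wᵢ/∂z = 0 on ℝ³ for every 0 ≤ i ≤ n−1. Define uₙ := (1/n)[ν Δu_{n−1} + f_{1,n−1} − ∑_{i=0}^{n−1}(uᵢ ∂u_{n−1−i}/∂x + vᵢ ∂u_{n−1−i}/∂y + wᵢ ∂u_{n−1−i}/∂z) − ∂p_{n−1}/∂x], and define vₙ and wₙ by the analogous formulas with (f_{2,n−1}, v, ∂p_{n−1}/∂y) and (f_{3,n−1}, w, ∂p_{n−1}/∂z) respectively, where Δ denotes the Laplacian ∂²/∂x² + ∂²/∂y² + ∂²/∂z² on ℝ³. Then ∂uₙ/∂x + ∂vₙ/∂y + ∂wₙ/∂z = 0 on ℝ³ if and only if p_{n−1} satisfies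 the Poisson equation Δp_{n−1} = ∂f_{1,n−1}/∂x + ∂f_{2,n−1}/∂y + ∂f_{3,n−1}/∂z − ∑_{i=0}^{n−1} (∂uᵢ/∂x)(∂u_{n−1−i}/∂x) − ∑_{i=0}^{n−1} (∂vᵢ/∂y)(∂v_{n−1−i}/∂y) − ∑_{i=0}^{n−1} (∂wᵢ/∂z)(∂w_{n−1−i}/∂z) − 2 ∑_{i=0}^{n−1} (∂vᵢ/∂x)(∂u_{n−1−i}/∂y) − 2 ∑_{i=0}^{n−1} (∂wᵢ/∂x)(∂u_{n−1−i}/∂z) − 2 ∑_{i=0}^{n−1} (∂vᵢ/∂z)(∂w_{n−1−i}/∂y) on ℝ³. -/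
open Finset

/-- x-derivative of a function on ℝ³. -/
noncomputable def sx (g : ℝ × ℝ × ℝ → ℝ) (x y z : ℝ) : ℝ :=
  deriv (fun a => g (a, y, z)) x

/-- y-derivative of a function on ℝ³. -/
noncomputable def sy (g : ℝ × ℝ × ℝ → ℝ) (x y z : ℝ) : ℝ :=
  deriv (fun a => g (x, a, z)) y

/-- z-derivative of a function on ℝ³. -/
noncomputable def sz (g : ℝ × ℝ × ℝ → ℝ) (x y z : ℝ) : ℝ :=
  deriv (fun a => g (x, y, a)) z

/-- second x-derivative of a function on ℝ³. -/
noncomputable def sxx (g : ℝ × ℝ × ℝ → ℝ) (x y z : ℝ) : ℝ :=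
  deriv (fun a => sx g a y z) x

/-- second y-derivative of a function on ℝ³. -/
noncomputable def syy (g : ℝ × ℝ × ℝ → ℝ) (x y z : ℝ) : ℝ :=
  deriv (fun a => sy g x a z) y

/-- second z-derivative of a function on ℝ³. -/
noncomputable def szz (g : ℝ × ℝ × ℝ → ℝ) (x y z : ℝ) : ℝ :=
  deriv (fun a => sz g x y a) z

abbrev E3 := ℝ × ℝ × ℝ

def ee1 : E3 := (1, 0, 0)
def ee2 : E3 := (0, 1, 0)
def ee3 : E3 := (0, 0, 1)

noncomputable def Dd (v : E3) (g : E3 → ℝ) : E3 → ℝ :=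
  fun p => fderiv ℝ g p v

lemma sx_eq (g : E3 → ℝ) (hg : Differentiable ℝ g) (x y z : ℝ) :
    sx g x y z = Dd ee1 g (x, y, z) := by
  have h1 : HasDerivAt (fun a : ℝ => (a, y, z)) ((1:ℝ),(0:ℝ),(0:ℝ)) x :=
    HasDerivAt.prodMk (hasDerivAt_id x) (HasDerivAt.prodMk (hasDerivAt_const x y) (hasDerivAt_const x z))
  exact ((hg (x,y,z)).hasFDerivAt.comp_hasDerivAt x h1).deriv

lemma sy_eq (g : E3 → ℝ) (hg : Differentiable ℝ g) (x y z : ℝ) :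
    sy g x y z = Dd ee2 g (x, y, z) := by
  have h1 : HasDerivAt (fun a : ℝ => (x, a, z)) ((0:ℝ),(1:ℝ),(0:ℝ)) y :=
    HasDerivAt.prodMk (hasDerivAt_const y x) (HasDerivAt.prodMk (hasDerivAt_id y) (hasDerivAt_const y z))
  exact ((hg (x,y,z)).hasFDerivAt.comp_hasDerivAt y h1).deriv

lemma sz_eq (g : E3 → ℝ) (hg : Differentiable ℝ g) (x y z : ℝ) :
    sz g x y z = Dd ee3 g (x, y, z) := by
  have h1 : HasDerivAt (fun a : ℝ => (x, y, a)) ((0:ℝ),(0:ℝ),(1:ℝ)) z :=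
    HasDerivAt.prodMk (hasDerivAt_const z x) (HasDerivAt.prodMk (hasDerivAt_const z y) (hasDerivAt_id z))
  exact ((hg (x,y,z)).hasFDerivAt.comp_hasDerivAt z h1).deriv

lemma Dd_contDiff (v : E3) {g : E3 → ℝ} (hg : ContDiff ℝ (⊤ : ℕ∞) g) :
    ContDiff ℝ (⊤ : ℕ∞) (Dd v g) :=
  (hg.fderiv_right (by simp)).clm_apply contDiff_const

lemma Dd_diff (v : E3) {g : E3 → ℝ} (hg : ContDiff ℝ (⊤ : ℕ∞) g) :
    Differentiable ℝ (Dd v g) :=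
  (Dd_contDiff v hg).differentiable (by simp)

lemma sxx_eq (g : E3 → ℝ) (hg : ContDiff ℝ (⊤ : ℕ∞) g) (x y z : ℝ) :
    sxx g x y z = Dd ee1 (Dd ee1 g) (x, y, z) := by
  unfold sxx
  have h1 : (fun a => sx g a y z) = (fun a => Dd ee1 g (a, y, z)) :=
    funext fun a => sx_eq g (hg.differentiable (by simp)) a y z
  rw [h1]
  exact sx_eq (Dd ee1 g) (Dd_diff ee1 hg) x y z

lemma syy_eq (g : E3 → ℝ) (hg : ContDiff ℝ (⊤ : ℕ∞) g) (x y z : ℝ) :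
    syy g x y z = Dd ee2 (Dd ee2 g) (x, y, z) := by
  unfold syy
  have h1 : (fun a => sy g x a z) = (fun a => Dd ee2 g (x, a, z)) :=
    funext fun a => sy_eq g (hg.differentiable (by simp)) x a z
  rw [h1]
  exact sy_eq (Dd ee2 g) (Dd_diff ee2 hg) x y z

lemma szz_eq (g : E3 → ℝ) (hg : ContDiff ℝ (⊤ : ℕ∞) g) (x y z : ℝ) :
    szz g x y z = Dd ee3 (Dd ee3 g) (x, y, z) := by
  unfold szz
  have h1 : (fun a => sz g x y a) = (fun a => Dd ee3 g (x, y, a)) :=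
    funext fun a => sz_eq g (hg.differentiable (by simp)) x y a
  rw [h1]
  exact sz_eq (Dd ee3 g) (Dd_diff ee3 hg) x y z

lemma Dd_comm {g : E3 → ℝ} (hg : ContDiff ℝ (⊤ : ℕ∞) g) (v w : E3) (p : E3) :
    Dd v (Dd w g) p = Dd w (Dd v g) p := by
  have hdg : Differentiable ℝ (fderiv ℝ g) := (hg.fderiv_right (m := (⊤ : ℕ∞)) (by simp)).differentiable (by simp)
  have h2 : HasFDerivAt (fderiv ℝ g) (fderiv ℝ (fderiv ℝ g) p) p := (hdg p).hasFDerivAt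
  have key : ∀ a b : E3, fderiv ℝ (fderiv ℝ g) p a b = fderiv ℝ (fderiv ℝ g) p b a :=
    second_derivative_symmetric (fun y => (hg.differentiable (by simp) y).hasFDerivAt) h2
  have e : ∀ w' u : E3, fderiv ℝ (Dd w' g) p u = fderiv ℝ (fderiv ℝ g) p u w' := by
    intro w' u
    have h3 : HasFDerivAt (Dd w' g)
        ((ContinuousLinearMap.apply ℝ ℝ w').comp (fderiv ℝ (fderiv ℝ g) p)) p :=
      ((ContinuousLinearMap.apply ℝ ℝ w').hasFDerivAt).comp p h2
    rw [h3.fderiv]; rfl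
  show fderiv ℝ (Dd w g) p v = fderiv ℝ (Dd v g) p w
  rw [e w v, e v w, key]

lemma Dd_add {g h : E3 → ℝ} (hg : Differentiable ℝ g) (hh : Differentiable ℝ h)
    (v p) : Dd v (fun q => g q + h q) p = Dd v g p + Dd v h p := by
  unfold Dd; rw [fderiv_fun_add (hg p) (hh p)]; rfl

lemma Dd_sub {g h : E3 → ℝ} (hg : Differentiable ℝ g) (hh : Differentiable ℝ h)
    (v p) : Dd v (fun q => g q - h q) p = Dd v g p - Dd v h p := by
  unfold Dd; rw [fderiv_fun_sub (hg p) (hh p)]; rfl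

lemma Dd_const_mul {g : E3 → ℝ} (hg : Differentiable ℝ g) (c : ℝ)
    (v p) : Dd v (fun q => c * g q) p = c * Dd v g p := by
  unfold Dd; rw [fderiv_const_mul (hg p) c]; rfl

lemma Dd_mul {g h : E3 → ℝ} (hg : Differentiable ℝ g) (hh : Differentiable ℝ h)
    (v p) : Dd v (fun q => g q * h q) p = Dd v g p * h p + g p * Dd v h p := by
  unfold Dd; rw [fderiv_fun_mul (hg p) (hh p)]
  simp [ContinuousLinearMap.add_apply, ContinuousLinearMap.smul_apply]; ring

lemma Dd_sum {s : Finset ℕ} {f : ℕ → E3 → ℝ}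
    (hf : ∀ i ∈ s, Differentiable ℝ (f i)) (v p) :
    Dd v (fun q => ∑ i ∈ s, f i q) p = ∑ i ∈ s, Dd v (f i) p := by
  unfold Dd; rw [fderiv_fun_sum (fun i hi => (hf i hi) p)]; simp

lemma Dd_congr {g h : E3 → ℝ} (e : ∀ q, g q = h q) (v p) : Dd v g p = Dd v h p := by
  unfold Dd; rw [funext e]

lemma Dd_add3_zero {A B C : E3 → ℝ} (hA : Differentiable ℝ A) (hB : Differentiable ℝ B)
    (hC : Differentiable ℝ C) (h0 : ∀ q, A q + B q + C q = 0) (a p) :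
    Dd a A p + Dd a B p + Dd a C p = 0 := by
  have h1 : Dd a (fun q => A q + B q + C q) p = Dd a (fun _ : E3 => (0:ℝ)) p :=
    Dd_congr h0 a p
  rw [Dd_add (g := fun q => A q + B q) (hA.add hB) hC, Dd_add hA hB] at h1
  simpa [Dd, fderiv_fun_const] using h1

lemma sum_reflect_mul (n : ℕ) (F G : ℕ → ℝ) :
    ∑ i ∈ range n, F i * G (n - 1 - i) = ∑ i ∈ range n, G i * F (n - 1 - i) := by
  rw [← Finset.sum_range_reflect (fun j => G j * F (n - 1 - j)) n]
  refine Finset.sum_congr rfl fun i hi => ?_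
  rw [Finset.mem_range] at hi
  have : n - 1 - (n - 1 - i) = i := by omega
  rw [this, mul_comm]

lemma Dd_G (a : E3) (k nu : ℝ) (g F P : E3 → ℝ) (n : ℕ) (f1 f2 f3 A : ℕ → E3 → ℝ)
    (hg : ContDiff ℝ (⊤ : ℕ∞) g) (hF : Differentiable ℝ F) (hP : Differentiable ℝ P)
    (hf1 : ∀ i ∈ Finset.range n, Differentiable ℝ (f1 i))
    (hf2 : ∀ i ∈ Finset.range n, Differentiable ℝ (f2 i))
    (hf3 : ∀ i ∈ Finset.range n, Differentiable ℝ (f3 i))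
    (hA : ∀ i ∈ Finset.range n, ContDiff ℝ (⊤ : ℕ∞) (A i)) (p : E3) :
    Dd a (fun q => k * (nu * (Dd ee1 (Dd ee1 g) q + Dd ee2 (Dd ee2 g) q + Dd ee3 (Dd ee3 g) q)
        + F q
        - (∑ i ∈ Finset.range n,
            (f1 i q * Dd ee1 (A i) q + f2 i q * Dd ee2 (A i) q + f3 i q * Dd ee3 (A i) q))
        - P q)) p
    = k * (nu * (Dd a (Dd ee1 (Dd ee1 g)) p + Dd a (Dd ee2 (Dd ee2 g)) p
          + Dd a (Dd ee3 (Dd ee3 g)) p)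
        + Dd a F p
        - (∑ i ∈ Finset.range n,
            (Dd a (f1 i) p * Dd ee1 (A i) p + f1 i p * Dd a (Dd ee1 (A i)) p
              + Dd a (f2 i) p * Dd ee2 (A i) p + f2 i p * Dd a (Dd ee2 (A i)) p
              + Dd a (f3 i) p * Dd ee3 (A i) p + f3 i p * Dd a (Dd ee3 (A i)) p))
        - Dd a P p) := by
  have d11 : Differentiable ℝ (Dd ee1 (Dd ee1 g)) := Dd_diff _ (Dd_contDiff _ hg)
  have d22 : Differentiable ℝ (Dd ee2 (Dd ee2 g)) := Dd_diff _ (Dd_contDiff _ hg)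
  have d33 : Differentiable ℝ (Dd ee3 (Dd ee3 g)) := Dd_diff _ (Dd_contDiff _ hg)
  have dLap : Differentiable ℝ
      (fun q => Dd ee1 (Dd ee1 g) q + Dd ee2 (Dd ee2 g) q + Dd ee3 (Dd ee3 g) q) :=
    (d11.add d22).add d33
  have dS : ∀ i ∈ Finset.range n, Differentiable ℝ
      (fun q => f1 i q * Dd ee1 (A i) q + f2 i q * Dd ee2 (A i) q + f3 i q * Dd ee3 (A i) q) :=
    fun i hi =>
      (((hf1 i hi).mul (Dd_diff _ (hA i hi))).add ((hf2 i hi).mul (Dd_diff _ (hA i hi)))).add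
        ((hf3 i hi).mul (Dd_diff _ (hA i hi)))
  have dsum : Differentiable ℝ (fun q => ∑ i ∈ Finset.range n,
      (f1 i q * Dd ee1 (A i) q + f2 i q * Dd ee2 (A i) q + f3 i q * Dd ee3 (A i) q)) := by
    apply Differentiable.fun_sum
    exact dS
  have hT4 : Differentiable ℝ (fun q => nu *
      (Dd ee1 (Dd ee1 g) q + Dd ee2 (Dd ee2 g) q + Dd ee3 (Dd ee3 g) q) + F q) :=
    (dLap.const_mul nu).add hF
  have hT3 : Differentiable ℝ (fun q => nu *
      (Dd ee1 (Dd ee1 g) q + Dd ee2 (Dd ee2 g) q + Dd ee3 (Dd ee3 g) q) + F q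
      - (∑ i ∈ Finset.range n,
          (f1 i q * Dd ee1 (A i) q + f2 i q * Dd ee2 (A i) q + f3 i q * Dd ee3 (A i) q))) :=
    hT4.sub dsum
  have hT2 : Differentiable ℝ (fun q => nu *
      (Dd ee1 (Dd ee1 g) q + Dd ee2 (Dd ee2 g) q + Dd ee3 (Dd ee3 g) q) + F q
      - (∑ i ∈ Finset.range n,
          (f1 i q * Dd ee1 (A i) q + f2 i q * Dd ee2 (A i) q + f3 i q * Dd ee3 (A i) q))
      - P q) := hT3.sub hP
  rw [Dd_const_mul hT2, Dd_sub hT3 hP, Dd_sub hT4 dsum, Dd_add (dLap.const_mul nu) hF,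
    Dd_const_mul dLap, Dd_add (g := fun q => Dd ee1 (Dd ee1 g) q + Dd ee2 (Dd ee2 g) q) (d11.add d22) d33, Dd_add d11 d22, Dd_sum dS]
  congr 2
  congr 1
  refine Finset.sum_congr rfl fun i hi => ?_
  rw [Dd_add (g := fun q => f1 i q * Dd ee1 (A i) q + f2 i q * Dd ee2 (A i) q) (h := fun q => f3 i q * Dd ee3 (A i) q) (((hf1 i hi).mul (Dd_diff _ (hA i hi))).add ((hf2 i hi).mul (Dd_diff _ (hA i hi))))
      ((hf3 i hi).mul (Dd_diff _ (hA i hi))),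
    Dd_add (g := fun q => f1 i q * Dd ee1 (A i) q) (h := fun q => f2 i q * Dd ee2 (A i) q) ((hf1 i hi).mul (Dd_diff _ (hA i hi))) ((hf2 i hi).mul (Dd_diff _ (hA i hi))),
    Dd_mul (hf1 i hi) (Dd_diff _ (hA i hi)), Dd_mul (hf2 i hi) (Dd_diff _ (hA i hi)),
    Dd_mul (hf3 i hi) (Dd_diff _ (hA i hi))]
  ring

lemma G_diff (k nu : ℝ) (g F P : E3 → ℝ) (n : ℕ) (f1 f2 f3 A : ℕ → E3 → ℝ)
    (hg : ContDiff ℝ (⊤ : ℕ∞) g) (hF : Differentiable ℝ F) (hP : Differentiable ℝ P)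
    (hf1 : ∀ i ∈ Finset.range n, Differentiable ℝ (f1 i))
    (hf2 : ∀ i ∈ Finset.range n, Differentiable ℝ (f2 i))
    (hf3 : ∀ i ∈ Finset.range n, Differentiable ℝ (f3 i))
    (hA : ∀ i ∈ Finset.range n, ContDiff ℝ (⊤ : ℕ∞) (A i)) :
    Differentiable ℝ (fun q => k * (nu * (Dd ee1 (Dd ee1 g) q + Dd ee2 (Dd ee2 g) q + Dd ee3 (Dd ee3 g) q)
        + F q
        - (∑ i ∈ Finset.range n,
            (f1 i q * Dd ee1 (A i) q + f2 i q * Dd ee2 (A i) q + f3 i q * Dd ee3 (A i) q))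
        - P q)) := by
  have d11 : Differentiable ℝ (Dd ee1 (Dd ee1 g)) := Dd_diff _ (Dd_contDiff _ hg)
  have d22 : Differentiable ℝ (Dd ee2 (Dd ee2 g)) := Dd_diff _ (Dd_contDiff _ hg)
  have d33 : Differentiable ℝ (Dd ee3 (Dd ee3 g)) := Dd_diff _ (Dd_contDiff _ hg)
  have dsum : Differentiable ℝ (fun q => ∑ i ∈ Finset.range n,
      (f1 i q * Dd ee1 (A i) q + f2 i q * Dd ee2 (A i) q + f3 i q * Dd ee3 (A i) q)) := by
    apply Differentiable.fun_sum
    intro i hi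
    exact (((hf1 i hi).mul (Dd_diff _ (hA i hi))).add ((hf2 i hi).mul (Dd_diff _ (hA i hi)))).add
      ((hf3 i hi).mul (Dd_diff _ (hA i hi)))
  exact (((((d11.add d22).add d33).const_mul nu).add hF).sub dsum |>.sub hP).const_mul k

lemma cancel_third (n : ℝ) (hn : n ≠ 0) (a b c : ℝ) :
    n * (1 / n * a + 1 / n * b + 1 / n * c) = a + b + c := by
  field_simp

/-- the level-`n` coefficients defined by the recursion (3.1)–(3.3) are
divergence-free if and only if the pressure coefficient `p_{n-1}` satisfies the Poisson
equation. -/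
theorem divergence_free_iff_pressure_poisson
    (n : ℕ) (hn : 1 ≤ n) (ν : ℝ)
    (uc vc wc : ℕ → ℝ × ℝ × ℝ → ℝ) (pc f₁c f₂c f₃c : ℝ × ℝ × ℝ → ℝ)
    (hu : ∀ i ≤ n - 1, ContDiff ℝ (⊤ : ℕ∞) (uc i)) (hv : ∀ i ≤ n - 1, ContDiff ℝ (⊤ : ℕ∞) (vc i))
    (hw : ∀ i ≤ n - 1, ContDiff ℝ (⊤ : ℕ∞) (wc i))
    (hp : ContDiff ℝ (⊤ : ℕ∞) pc) (hf₁ : ContDiff ℝ (⊤ : ℕ∞) f₁c) (hf₂ : ContDiff ℝ (⊤ : ℕ∞) f₂c)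
    (hf₃ : ContDiff ℝ (⊤ : ℕ∞) f₃c)
    (hdiv : ∀ i ≤ n - 1, ∀ x y z : ℝ,
      sx (uc i) x y z + sy (vc i) x y z + sz (wc i) x y z = 0)
    (uN vN wN : ℝ × ℝ × ℝ → ℝ)
    (huN : ∀ x y z : ℝ,
      uN (x, y, z) = (1 / (n : ℝ)) *
        (ν * (sxx (uc (n - 1)) x y z + syy (uc (n - 1)) x y z + szz (uc (n - 1)) x y z)
          + f₁c (x, y, z)
          - ∑ i ∈ Finset.range n,
              (uc i (x, y, z) * sx (uc (n - 1 - i)) x y z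
                + vc i (x, y, z) * sy (uc (n - 1 - i)) x y z
                + wc i (x, y, z) * sz (uc (n - 1 - i)) x y z)
          - sx pc x y z))
    (hvN : ∀ x y z : ℝ,
      vN (x, y, z) = (1 / (n : ℝ)) *
        (ν * (sxx (vc (n - 1)) x y z + syy (vc (n - 1)) x y z + szz (vc (n - 1)) x y z)
          + f₂c (x, y, z)
          - ∑ i ∈ Finset.range n,
              (uc i (x, y, z) * sx (vc (n - 1 - i)) x y z
                + vc i (x, y, z) * sy (vc (n - 1 - i)) x y z
                + wc i (x, y, z) * sz (vc (n - 1 - i)) x y z)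
          - sy pc x y z))
    (hwN : ∀ x y z : ℝ,
      wN (x, y, z) = (1 / (n : ℝ)) *
        (ν * (sxx (wc (n - 1)) x y z + syy (wc (n - 1)) x y z + szz (wc (n - 1)) x y z)
          + f₃c (x, y, z)
          - ∑ i ∈ Finset.range n,
              (uc i (x, y, z) * sx (wc (n - 1 - i)) x y z
                + vc i (x, y, z) * sy (wc (n - 1 - i)) x y z
                + wc i (x, y, z) * sz (wc (n - 1 - i)) x y z)
          - sz pc x y z)) :
    (∀ x y z : ℝ, sx uN x y z + sy vN x y z + sz wN x y z = 0)
      ↔ (∀ x y z : ℝ,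
          sxx pc x y z + syy pc x y z + szz pc x y z
            = sx f₁c x y z + sy f₂c x y z + sz f₃c x y z
              - ∑ i ∈ Finset.range n, sx (uc i) x y z * sx (uc (n - 1 - i)) x y z
              - ∑ i ∈ Finset.range n, sy (vc i) x y z * sy (vc (n - 1 - i)) x y z
              - ∑ i ∈ Finset.range n, sz (wc i) x y z * sz (wc (n - 1 - i)) x y z
              - 2 * ∑ i ∈ Finset.range n, sx (vc i) x y z * sy (uc (n - 1 - i)) x y z
              - 2 * ∑ i ∈ Finset.range n, sx (wc i) x y z * sz (uc (n - 1 - i)) x y z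
              - 2 * ∑ i ∈ Finset.range n, sz (vc i) x y z * sy (wc (n - 1 - i)) x y z) := by
  have hn0 : (n : ℝ) ≠ 0 := Nat.cast_ne_zero.mpr (by omega)
  have hul : ContDiff ℝ (⊤ : ℕ∞) (uc (n - 1)) := hu (n - 1) le_rfl
  have hvl : ContDiff ℝ (⊤ : ℕ∞) (vc (n - 1)) := hv (n - 1) le_rfl
  have hwl : ContDiff ℝ (⊤ : ℕ∞) (wc (n - 1)) := hw (n - 1) le_rfl
  have hpd : Differentiable ℝ pc := hp.differentiable (by simp)
  have hf1d : Differentiable ℝ f₁c := hf₁.differentiable (by simp)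
  have hf2d : Differentiable ℝ f₂c := hf₂.differentiable (by simp)
  have hf3d : Differentiable ℝ f₃c := hf₃.differentiable (by simp)
  have hpd1 : Differentiable ℝ (Dd ee1 pc) := Dd_diff ee1 hp
  have hpd2 : Differentiable ℝ (Dd ee2 pc) := Dd_diff ee2 hp
  have hpd3 : Differentiable ℝ (Dd ee3 pc) := Dd_diff ee3 hp
  have hud : ∀ i ∈ Finset.range n, Differentiable ℝ (uc i) :=
    fun i hi => (hu i (by rw [Finset.mem_range] at hi; omega)).differentiable (by simp)
  have hvd : ∀ i ∈ Finset.range n, Differentiable ℝ (vc i) :=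
    fun i hi => (hv i (by rw [Finset.mem_range] at hi; omega)).differentiable (by simp)
  have hwd : ∀ i ∈ Finset.range n, Differentiable ℝ (wc i) :=
    fun i hi => (hw i (by rw [Finset.mem_range] at hi; omega)).differentiable (by simp)
  have hA1 : ∀ i ∈ Finset.range n, ContDiff ℝ (⊤ : ℕ∞) (uc (n - 1 - i)) := fun i _ => hu _ (Nat.sub_le _ _)
  have hA2 : ∀ i ∈ Finset.range n, ContDiff ℝ (⊤ : ℕ∞) (vc (n - 1 - i)) := fun i _ => hv _ (Nat.sub_le _ _)
  have hA3 : ∀ i ∈ Finset.range n, ContDiff ℝ (⊤ : ℕ∞) (wc (n - 1 - i)) := fun i _ => hw _ (Nat.sub_le _ _)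
  have hadvu : ∀ i : ℕ, Differentiable ℝ (uc (n - 1 - i)) :=
    fun i => (hu _ (Nat.sub_le _ _)).differentiable (by simp)
  have hadvv : ∀ i : ℕ, Differentiable ℝ (vc (n - 1 - i)) :=
    fun i => (hv _ (Nat.sub_le _ _)).differentiable (by simp)
  have hadvw : ∀ i : ℕ, Differentiable ℝ (wc (n - 1 - i)) :=
    fun i => (hw _ (Nat.sub_le _ _)).differentiable (by simp)
  have hdiv0 : ∀ j, j ≤ n - 1 → ∀ q : ℝ × ℝ × ℝ,
      Dd ee1 (uc j) q + Dd ee2 (vc j) q + Dd ee3 (wc j) q = 0 := by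
    intro j hj q
    obtain ⟨a, b, c⟩ := q
    rw [← sx_eq _ ((hu j hj).differentiable (by simp)) a b c,
      ← sy_eq _ ((hv j hj).differentiable (by simp)) a b c,
      ← sz_eq _ ((hw j hj).differentiable (by simp)) a b c]
    exact hdiv j hj a b c
  have hdiv1 : ∀ j, j ≤ n - 1 → ∀ (a q : ℝ × ℝ × ℝ),
      Dd a (Dd ee1 (uc j)) q + Dd a (Dd ee2 (vc j)) q + Dd a (Dd ee3 (wc j)) q = 0 :=
    fun j hj a q => Dd_add3_zero (Dd_diff _ (hu j hj)) (Dd_diff _ (hv j hj))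
      (Dd_diff _ (hw j hj)) (hdiv0 j hj) a q
  have hdiv2 : ∀ j, j ≤ n - 1 → ∀ (a b q : ℝ × ℝ × ℝ),
      Dd a (Dd b (Dd ee1 (uc j))) q + Dd a (Dd b (Dd ee2 (vc j))) q
        + Dd a (Dd b (Dd ee3 (wc j))) q = 0 :=
    fun j hj a b q => Dd_add3_zero (Dd_diff _ (Dd_contDiff _ (hu j hj)))
      (Dd_diff _ (Dd_contDiff _ (hv j hj))) (Dd_diff _ (Dd_contDiff _ (hw j hj)))
      (fun q' => hdiv1 j hj b q') a q
  have main : ∀ x y z : ℝ, (n : ℝ) * (sx uN x y z + sy vN x y z + sz wN x y z) =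
      (Dd ee1 (f₁c) (x, y, z) + Dd ee2 (f₂c) (x, y, z) + Dd ee3 (f₃c) (x, y, z) - (∑ i ∈ Finset.range n, Dd ee1 (uc i) (x, y, z) * Dd ee1 (uc (n - 1 - i)) (x, y, z)) - (∑ i ∈ Finset.range n, Dd ee2 (vc i) (x, y, z) * Dd ee2 (vc (n - 1 - i)) (x, y, z)) - (∑ i ∈ Finset.range n, Dd ee3 (wc i) (x, y, z) * Dd ee3 (wc (n - 1 - i)) (x, y, z)) - 2 * (∑ i ∈ Finset.range n, Dd ee1 (vc i) (x, y, z) * Dd ee2 (uc (n - 1 - i)) (x, y, z)) - 2 * (∑ i ∈ Finset.range n, Dd ee1 (wc i) (x, y, z) * Dd ee3 (uc (n - 1 - i)) (x, y, z)) - 2 * (∑ i ∈ Finset.range n, Dd ee3 (vc i) (x, y, z) * Dd ee2 (wc (n - 1 - i)) (x, y, z))) - (Dd ee1 (Dd ee1 (pc)) (x, y, z) + Dd ee2 (Dd ee2 (pc)) (x, y, z) + Dd ee3 (Dd ee3 (pc)) (x, y, z)) := by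
    intro x y z
    have huNfun : uN = (fun q : ℝ × ℝ × ℝ => (1 / (n : ℝ)) * (ν * (Dd ee1 (Dd ee1 (uc (n - 1))) q + Dd ee2 (Dd ee2 (uc (n - 1))) q + Dd ee3 (Dd ee3 (uc (n - 1))) q) + f₁c q - (∑ i ∈ Finset.range n, (uc i q * Dd ee1 (uc (n - 1 - i)) q + vc i q * Dd ee2 (uc (n - 1 - i)) q + wc i q * Dd ee3 (uc (n - 1 - i)) q)) - Dd ee1 pc q)) := by
      funext q
      obtain ⟨a, b, c⟩ := q
      have hs : (∑ i ∈ Finset.range n, (uc i (a, b, c) * sx (uc (n - 1 - i)) a b c + vc i (a, b, c) * sy (uc (n - 1 - i)) a b c + wc i (a, b, c) * sz (uc (n - 1 - i)) a b c)) = ∑ i ∈ Finset.range n, (uc i (a, b, c) * Dd ee1 (uc (n - 1 - i)) (a, b, c) + vc i (a, b, c) * Dd ee2 (uc (n - 1 - i)) (a, b, c) + wc i (a, b, c) * Dd ee3 (uc (n - 1 - i)) (a, b, c)) :=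
        Finset.sum_congr rfl fun i _ => by
          rw [sx_eq _ (hadvu i) a b c, sy_eq _ (hadvu i) a b c, sz_eq _ (hadvu i) a b c]
      rw [huN a b c, hs, sxx_eq _ hul, syy_eq _ hul, szz_eq _ hul, sx_eq pc hpd]
    have hvNfun : vN = (fun q : ℝ × ℝ × ℝ => (1 / (n : ℝ)) * (ν * (Dd ee1 (Dd ee1 (vc (n - 1))) q + Dd ee2 (Dd ee2 (vc (n - 1))) q + Dd ee3 (Dd ee3 (vc (n - 1))) q) + f₂c q - (∑ i ∈ Finset.range n, (uc i q * Dd ee1 (vc (n - 1 - i)) q + vc i q * Dd ee2 (vc (n - 1 - i)) q + wc i q * Dd ee3 (vc (n - 1 - i)) q)) - Dd ee2 pc q)) := by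
      funext q
      obtain ⟨a, b, c⟩ := q
      have hs : (∑ i ∈ Finset.range n, (uc i (a, b, c) * sx (vc (n - 1 - i)) a b c + vc i (a, b, c) * sy (vc (n - 1 - i)) a b c + wc i (a, b, c) * sz (vc (n - 1 - i)) a b c)) = ∑ i ∈ Finset.range n, (uc i (a, b, c) * Dd ee1 (vc (n - 1 - i)) (a, b, c) + vc i (a, b, c) * Dd ee2 (vc (n - 1 - i)) (a, b, c) + wc i (a, b, c) * Dd ee3 (vc (n - 1 - i)) (a, b, c)) :=
        Finset.sum_congr rfl fun i _ => by
          rw [sx_eq _ (hadvv i) a b c, sy_eq _ (hadvv i) a b c, sz_eq _ (hadvv i) a b c]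
      rw [hvN a b c, hs, sxx_eq _ hvl, syy_eq _ hvl, szz_eq _ hvl, sy_eq pc hpd]
    have hwNfun : wN = (fun q : ℝ × ℝ × ℝ => (1 / (n : ℝ)) * (ν * (Dd ee1 (Dd ee1 (wc (n - 1))) q + Dd ee2 (Dd ee2 (wc (n - 1))) q + Dd ee3 (Dd ee3 (wc (n - 1))) q) + f₃c q - (∑ i ∈ Finset.range n, (uc i q * Dd ee1 (wc (n - 1 - i)) q + vc i q * Dd ee2 (wc (n - 1 - i)) q + wc i q * Dd ee3 (wc (n - 1 - i)) q)) - Dd ee3 pc q)) := by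
      funext q
      obtain ⟨a, b, c⟩ := q
      have hs : (∑ i ∈ Finset.range n, (uc i (a, b, c) * sx (wc (n - 1 - i)) a b c + vc i (a, b, c) * sy (wc (n - 1 - i)) a b c + wc i (a, b, c) * sz (wc (n - 1 - i)) a b c)) = ∑ i ∈ Finset.range n, (uc i (a, b, c) * Dd ee1 (wc (n - 1 - i)) (a, b, c) + vc i (a, b, c) * Dd ee2 (wc (n - 1 - i)) (a, b, c) + wc i (a, b, c) * Dd ee3 (wc (n - 1 - i)) (a, b, c)) :=
        Finset.sum_congr rfl fun i _ => by
          rw [sx_eq _ (hadvw i) a b c, sy_eq _ (hadvw i) a b c, sz_eq _ (hadvw i) a b c]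
      rw [hwN a b c, hs, sxx_eq _ hwl, syy_eq _ hwl, szz_eq _ hwl, sz_eq pc hpd]
    have eq1 : sx uN x y z = (1 / (n : ℝ)) * (ν * (Dd ee1 (Dd ee1 (Dd ee1 (uc (n - 1)))) (x, y, z) + Dd ee1 (Dd ee2 (Dd ee2 (uc (n - 1)))) (x, y, z) + Dd ee1 (Dd ee3 (Dd ee3 (uc (n - 1)))) (x, y, z)) + Dd ee1 (f₁c) (x, y, z) - (∑ i ∈ Finset.range n, (Dd ee1 (uc i) (x, y, z) * Dd ee1 (uc (n - 1 - i)) (x, y, z) + uc i (x, y, z) * Dd ee1 (Dd ee1 (uc (n - 1 - i))) (x, y, z) + Dd ee1 (vc i) (x, y, z) * Dd ee2 (uc (n - 1 - i)) (x, y, z) + vc i (x, y, z) * Dd ee1 (Dd ee2 (uc (n - 1 - i))) (x, y, z) + Dd ee1 (wc i) (x, y, z) * Dd ee3 (uc (n - 1 - i)) (x, y, z) + wc i (x, y, z) * Dd ee1 (Dd ee3 (uc (n - 1 - i))) (x, y, z))) - Dd ee1 (Dd ee1 (pc)) (x, y, z)) := by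
      rw [huNfun]
      exact (sx_eq _ (G_diff (1 / (n : ℝ)) ν (uc (n - 1)) f₁c (Dd ee1 pc) n uc vc wc (fun i => uc (n - 1 - i)) hul hf1d hpd1 hud hvd hwd hA1) x y z).trans
        (Dd_G ee1 (1 / (n : ℝ)) ν (uc (n - 1)) f₁c (Dd ee1 pc) n uc vc wc (fun i => uc (n - 1 - i)) hul hf1d hpd1 hud hvd hwd hA1 (x, y, z))
    have eq2 : sy vN x y z = (1 / (n : ℝ)) * (ν * (Dd ee2 (Dd ee1 (Dd ee1 (vc (n - 1)))) (x, y, z) + Dd ee2 (Dd ee2 (Dd ee2 (vc (n - 1)))) (x, y, z) + Dd ee2 (Dd ee3 (Dd ee3 (vc (n - 1)))) (x, y, z)) + Dd ee2 (f₂c) (x, y, z) - (∑ i ∈ Finset.range n, (Dd ee2 (uc i) (x, y, z) * Dd ee1 (vc (n - 1 - i)) (x, y, z) + uc i (x, y, z) * Dd ee2 (Dd ee1 (vc (n - 1 - i))) (x, y, z) + Dd ee2 (vc i) (x, y, z) * Dd ee2 (vc (n - 1 - i)) (x, y, z) + vc i (x, y, z) * Dd ee2 (Dd ee2 (vc (n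 - 1 - i))) (x, y, z) + Dd ee2 (wc i) (x, y, z) * Dd ee3 (vc (n - 1 - i)) (x, y, z) + wc i (x, y, z) * Dd ee2 (Dd ee3 (vc (n - 1 - i))) (x, y, z))) - Dd ee2 (Dd ee2 (pc)) (x, y, z)) := by
      rw [hvNfun]
      exact (sy_eq _ (G_diff (1 / (n : ℝ)) ν (vc (n - 1)) f₂c (Dd ee2 pc) n uc vc wc (fun i => vc (n - 1 - i)) hvl hf2d hpd2 hud hvd hwd hA2) x y z).trans
        (Dd_G ee2 (1 / (n : ℝ)) ν (vc (n - 1)) f₂c (Dd ee2 pc) n uc vc wc (fun i => vc (n - 1 - i)) hvl hf2d hpd2 hud hvd hwd hA2 (x, y, z))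
    have eq3 : sz wN x y z = (1 / (n : ℝ)) * (ν * (Dd ee3 (Dd ee1 (Dd ee1 (wc (n - 1)))) (x, y, z) + Dd ee3 (Dd ee2 (Dd ee2 (wc (n - 1)))) (x, y, z) + Dd ee3 (Dd ee3 (Dd ee3 (wc (n - 1)))) (x, y, z)) + Dd ee3 (f₃c) (x, y, z) - (∑ i ∈ Finset.range n, (Dd ee3 (uc i) (x, y, z) * Dd ee1 (wc (n - 1 - i)) (x, y, z) + uc i (x, y, z) * Dd ee3 (Dd ee1 (wc (n - 1 - i))) (x, y, z) + Dd ee3 (vc i) (x, y, z) * Dd ee2 (wc (n - 1 - i)) (x, y, z) + vc i (x, y, z) * Dd ee3 (Dd ee2 (wc (n - 1 - i))) (x, y, z) + Dd ee3 (wc i) (x, y, z) * Dd ee3 (wc (n - 1 - i)) (x, y, z) + wc i (x, y, z) * Dd ee3 (Dd ee3 (wc (n - 1 - i))) (x, y, z))) - Dd ee3 (Dd ee3 (pc)) (x, y, z)) := by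
      rw [hwNfun]
      exact (sz_eq _ (G_diff (1 / (n : ℝ)) ν (wc (n - 1)) f₃c (Dd ee3 pc) n uc vc wc (fun i => wc (n - 1 - i)) hwl hf3d hpd3 hud hvd hwd hA3) x y z).trans
        (Dd_G ee3 (1 / (n : ℝ)) ν (wc (n - 1)) f₃c (Dd ee3 pc) n uc vc wc (fun i => wc (n - 1 - i)) hwl hf3d hpd3 hud hvd hwd hA3 (x, y, z))
    have hnu0 : Dd ee1 (Dd ee1 (Dd ee1 (uc (n - 1)))) (x, y, z) + Dd ee1 (Dd ee2 (Dd ee2 (uc (n - 1)))) (x, y, z) + Dd ee1 (Dd ee3 (Dd ee3 (uc (n - 1)))) (x, y, z) + Dd ee2 (Dd ee1 (Dd ee1 (vc (n - 1)))) (x, y, z) + Dd ee2 (Dd ee2 (Dd ee2 (vc (n - 1)))) (x, y, z) + Dd ee2 (Dd ee3 (Dd ee3 (vc (n - 1)))) (x, y, z) + Dd ee3 (Dd ee1 (Dd ee1 (wc (n - 1)))) (x, y, z) + Dd ee3 (Dd ee2 (Dd ee2 (wc (n - 1)))) (x, y, z) + Dd ee3 (Dd ee3 (Dd ee3 (wc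 (n - 1)))) (x, y, z) = 0 := by
      have m12 : Dd ee1 (Dd ee2 (Dd ee2 (uc (n - 1)))) (x, y, z) = Dd ee2 (Dd ee2 (Dd ee1 (uc (n - 1)))) (x, y, z) :=
        (Dd_comm (Dd_contDiff ee2 hul) ee1 ee2 (x, y, z)).trans
          (Dd_congr (fun q => Dd_comm hul ee1 ee2 q) ee2 (x, y, z))
      have m13 : Dd ee1 (Dd ee3 (Dd ee3 (uc (n - 1)))) (x, y, z) = Dd ee3 (Dd ee3 (Dd ee1 (uc (n - 1)))) (x, y, z) :=
        (Dd_comm (Dd_contDiff ee3 hul) ee1 ee3 (x, y, z)).trans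
          (Dd_congr (fun q => Dd_comm hul ee1 ee3 q) ee3 (x, y, z))
      have m21 : Dd ee2 (Dd ee1 (Dd ee1 (vc (n - 1)))) (x, y, z) = Dd ee1 (Dd ee1 (Dd ee2 (vc (n - 1)))) (x, y, z) :=
        (Dd_comm (Dd_contDiff ee1 hvl) ee2 ee1 (x, y, z)).trans
          (Dd_congr (fun q => Dd_comm hvl ee2 ee1 q) ee1 (x, y, z))
      have m23 : Dd ee2 (Dd ee3 (Dd ee3 (vc (n - 1)))) (x, y, z) = Dd ee3 (Dd ee3 (Dd ee2 (vc (n - 1)))) (x, y, z) :=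
        (Dd_comm (Dd_contDiff ee3 hvl) ee2 ee3 (x, y, z)).trans
          (Dd_congr (fun q => Dd_comm hvl ee2 ee3 q) ee3 (x, y, z))
      have m31 : Dd ee3 (Dd ee1 (Dd ee1 (wc (n - 1)))) (x, y, z) = Dd ee1 (Dd ee1 (Dd ee3 (wc (n - 1)))) (x, y, z) :=
        (Dd_comm (Dd_contDiff ee1 hwl) ee3 ee1 (x, y, z)).trans
          (Dd_congr (fun q => Dd_comm hwl ee3 ee1 q) ee1 (x, y, z))
      have m32 : Dd ee3 (Dd ee2 (Dd ee2 (wc (n - 1)))) (x, y, z) = Dd ee2 (Dd ee2 (Dd ee3 (wc (n - 1)))) (x, y, z) :=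
        (Dd_comm (Dd_contDiff ee2 hwl) ee3 ee2 (x, y, z)).trans
          (Dd_congr (fun q => Dd_comm hwl ee3 ee2 q) ee2 (x, y, z))
      have z1 := hdiv2 (n - 1) le_rfl ee1 ee1 (x, y, z)
      have z2 := hdiv2 (n - 1) le_rfl ee2 ee2 (x, y, z)
      have z3 := hdiv2 (n - 1) le_rfl ee3 ee3 (x, y, z)
      linear_combination z1 + z2 + z3 + m12 + m13 + m21 + m23 + m31 + m32
    have hper : ∀ i ∈ Finset.range n, (Dd ee1 (uc i) (x, y, z) * Dd ee1 (uc (n - 1 - i)) (x, y, z) + uc i (x, y, z) * Dd ee1 (Dd ee1 (uc (n - 1 - i))) (x, y, z) + Dd ee1 (vc i) (x, y, z) * Dd ee2 (uc (n - 1 - i)) (x, y, z) + vc i (x, y, z) * Dd ee1 (Dd ee2 (uc (n - 1 - i))) (x, y, z) + Dd ee1 (wc i) (x, y, z) * Dd ee3 (uc (n - 1 - i)) (x, y, z) + wc i (x, y, z) * Dd ee1 (Dd ee3 (uc (n - 1 - i))) (x, y, z)) + (Dd ee2 (uc i) (x, y, z) * Dd ee1 (vc (n - 1 - i)) (x, y,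 z) + uc i (x, y, z) * Dd ee2 (Dd ee1 (vc (n - 1 - i))) (x, y, z) + Dd ee2 (vc i) (x, y, z) * Dd ee2 (vc (n - 1 - i)) (x, y, z) + vc i (x, y, z) * Dd ee2 (Dd ee2 (vc (n - 1 - i))) (x, y, z) + Dd ee2 (wc i) (x, y, z) * Dd ee3 (vc (n - 1 - i)) (x, y, z) + wc i (x, y, z) * Dd ee2 (Dd ee3 (vc (n - 1 - i))) (x, y, z)) + (Dd ee3 (uc i) (x, y, z) * Dd ee1 (wc (n - 1 - i)) (x, y, z) + uc i (x, y, z) * Dd ee3 (Dd ee1 (wc (n - 1 - i))) (x, y, z) + Dd ee3 (vc i) (x, y, z) * Dd ee2 (wc (n - 1 - i)) (x, y, z) + vc i (x, y, z) * Dd ee3 (Dd ee2 (wc (n - 1 - i))) (x, y, z) + Dd ee3 (wc i) (x, y, z) * Dd ee3 (wc (n - 1 - i)) (x, y, z) + wc i (x, y, z) * Dd ee3 (Dd ee3 (wc (n - 1 - i))) (x, y, z)) = (Dd ee1 (uc i) (x, y, z) * Dd ee1 (uc (n - 1 - i)) (x, y, z) + Dd ee1 (vc i) (x, y, z) * Dd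 ee2 (uc (n - 1 - i)) (x, y, z) + Dd ee1 (wc i) (x, y, z) * Dd ee3 (uc (n - 1 - i)) (x, y, z) + Dd ee2 (uc i) (x, y, z) * Dd ee1 (vc (n - 1 - i)) (x, y, z) + Dd ee2 (vc i) (x, y, z) * Dd ee2 (vc (n - 1 - i)) (x, y, z) + Dd ee2 (wc i) (x, y, z) * Dd ee3 (vc (n - 1 - i)) (x, y, z) + Dd ee3 (uc i) (x, y, z) * Dd ee1 (wc (n - 1 - i)) (x, y, z) + Dd ee3 (vc i) (x, y, z) * Dd ee2 (wc (n - 1 - i)) (x, y, z) + Dd ee3 (wc i) (x, y, z) * Dd ee3 (wc (n - 1 - i)) (x, y, z)) := by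
      intro i hi
      have hj : n - 1 - i ≤ n - 1 := Nat.sub_le _ _
      have hAs : ContDiff ℝ (⊤ : ℕ∞) (uc (n - 1 - i)) := hu _ hj
      have hBs : ContDiff ℝ (⊤ : ℕ∞) (vc (n - 1 - i)) := hv _ hj
      have hCs : ContDiff ℝ (⊤ : ℕ∞) (wc (n - 1 - i)) := hw _ hj
      have c1 : Dd ee2 (Dd ee1 (vc (n - 1 - i))) (x, y, z) = Dd ee1 (Dd ee2 (vc (n - 1 - i))) (x, y, z) := Dd_comm hBs ee2 ee1 (x, y, z)
      have c2 : Dd ee3 (Dd ee1 (wc (n - 1 - i))) (x, y, z) = Dd ee1 (Dd ee3 (wc (n - 1 - i))) (x, y, z) := Dd_comm hCs ee3 ee1 (x, y, z)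
      have c3 : Dd ee1 (Dd ee2 (uc (n - 1 - i))) (x, y, z) = Dd ee2 (Dd ee1 (uc (n - 1 - i))) (x, y, z) := Dd_comm hAs ee1 ee2 (x, y, z)
      have c4 : Dd ee3 (Dd ee2 (wc (n - 1 - i))) (x, y, z) = Dd ee2 (Dd ee3 (wc (n - 1 - i))) (x, y, z) := Dd_comm hCs ee3 ee2 (x, y, z)
      have c5 : Dd ee1 (Dd ee3 (uc (n - 1 - i))) (x, y, z) = Dd ee3 (Dd ee1 (uc (n - 1 - i))) (x, y, z) := Dd_comm hAs ee1 ee3 (x, y, z)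
      have c6 : Dd ee2 (Dd ee3 (vc (n - 1 - i))) (x, y, z) = Dd ee3 (Dd ee2 (vc (n - 1 - i))) (x, y, z) := Dd_comm hBs ee2 ee3 (x, y, z)
      have d1 := hdiv1 (n - 1 - i) hj ee1 (x, y, z)
      have d2 := hdiv1 (n - 1 - i) hj ee2 (x, y, z)
      have d3 := hdiv1 (n - 1 - i) hj ee3 (x, y, z)
      linear_combination uc i (x, y, z) * (d1 + c1 + c2) + vc i (x, y, z) * (d2 + c3 + c4) + wc i (x, y, z) * (d3 + c5 + c6)
    have hc0 : (∑ i ∈ Finset.range n, (Dd ee1 (uc i) (x, y, z) * Dd ee1 (uc (n - 1 - i)) (x, y, z) + uc i (x, y, z) * Dd ee1 (Dd ee1 (uc (n - 1 - i))) (x, y, z) + Dd ee1 (vc i) (x, y, z) * Dd ee2 (uc (n - 1 - i)) (x, y, z) + vc i (x, y, z) * Dd ee1 (Dd ee2 (uc (n - 1 - i))) (x, y, z) + Dd ee1 (wc i) (x, y, z) * Dd ee3 (uc (n - 1 - i)) (x, y, z) + wc i (x, y, z) * Dd ee1 (Dd ee3 (uc (n - 1 - i))) (x, y, z))) + (∑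 i ∈ Finset.range n, (Dd ee2 (uc i) (x, y, z) * Dd ee1 (vc (n - 1 - i)) (x, y, z) + uc i (x, y, z) * Dd ee2 (Dd ee1 (vc (n - 1 - i))) (x, y, z) + Dd ee2 (vc i) (x, y, z) * Dd ee2 (vc (n - 1 - i)) (x, y, z) + vc i (x, y, z) * Dd ee2 (Dd ee2 (vc (n - 1 - i))) (x, y, z) + Dd ee2 (wc i) (x, y, z) * Dd ee3 (vc (n - 1 - i)) (x, y, z) + wc i (x, y, z) * Dd ee2 (Dd ee3 (vc (n - 1 - i))) (x, y, z))) + (∑ i ∈ Finset.range n, (Dd ee3 (uc i) (x, y, z) * Dd ee1 (wc (n - 1 - i)) (x, y, z) + uc i (x, y, z) * Dd ee3 (Dd ee1 (wc (n - 1 - i))) (x, y, z) + Dd ee3 (vc i) (x, y, z) * Dd ee2 (wc (n - 1 - i)) (x, y, z) + vc i (x, y, z) * Dd ee3 (Dd ee2 (wc (n - 1 - i))) (x, y, z) + Dd ee3 (wc i) (x, y, z) * Dd ee3 (wc (n - 1 - i)) (x, y, z) + wc i (x, y, z) * Dd ee3 (Dd ee3 (wc (n - 1 - i))) (x, y, z)))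 = ∑ i ∈ Finset.range n, ((Dd ee1 (uc i) (x, y, z) * Dd ee1 (uc (n - 1 - i)) (x, y, z) + uc i (x, y, z) * Dd ee1 (Dd ee1 (uc (n - 1 - i))) (x, y, z) + Dd ee1 (vc i) (x, y, z) * Dd ee2 (uc (n - 1 - i)) (x, y, z) + vc i (x, y, z) * Dd ee1 (Dd ee2 (uc (n - 1 - i))) (x, y, z) + Dd ee1 (wc i) (x, y, z) * Dd ee3 (uc (n - 1 - i)) (x, y, z) + wc i (x, y, z) * Dd ee1 (Dd ee3 (uc (n - 1 - i))) (x, y, z)) + (Dd ee2 (uc i) (x, y, z) * Dd ee1 (vc (n - 1 - i)) (x, y, z) + uc i (x, y, z) * Dd ee2 (Dd ee1 (vc (n - 1 - i))) (x, y, z) + Dd ee2 (vc i) (x, y, z) * Dd ee2 (vc (n - 1 - i)) (x, y, z) + vc i (x, y, z) * Dd ee2 (Dd ee2 (vc (n - 1 - i))) (x, y, z) + Dd ee2 (wc i) (x, y, z) * Dd ee3 (vc (n - 1 - i)) (x, y, z) + wc i (x, y, z) * Dd ee2 (Dd ee3 (vc (n - 1 - i))) (x, y, z)) + (Dd ee3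 (uc i) (x, y, z) * Dd ee1 (wc (n - 1 - i)) (x, y, z) + uc i (x, y, z) * Dd ee3 (Dd ee1 (wc (n - 1 - i))) (x, y, z) + Dd ee3 (vc i) (x, y, z) * Dd ee2 (wc (n - 1 - i)) (x, y, z) + vc i (x, y, z) * Dd ee3 (Dd ee2 (wc (n - 1 - i))) (x, y, z) + Dd ee3 (wc i) (x, y, z) * Dd ee3 (wc (n - 1 - i)) (x, y, z) + wc i (x, y, z) * Dd ee3 (Dd ee3 (wc (n - 1 - i))) (x, y, z))) := by
      simp only [Finset.sum_add_distrib]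
    have hc1 : (∑ i ∈ Finset.range n, ((Dd ee1 (uc i) (x, y, z) * Dd ee1 (uc (n - 1 - i)) (x, y, z) + uc i (x, y, z) * Dd ee1 (Dd ee1 (uc (n - 1 - i))) (x, y, z) + Dd ee1 (vc i) (x, y, z) * Dd ee2 (uc (n - 1 - i)) (x, y, z) + vc i (x, y, z) * Dd ee1 (Dd ee2 (uc (n - 1 - i))) (x, y, z) + Dd ee1 (wc i) (x, y, z) * Dd ee3 (uc (n - 1 - i)) (x, y, z) + wc i (x, y, z) * Dd ee1 (Dd ee3 (uc (n - 1 - i))) (x, y, z)) + (Dd ee2 (uc i) (x, y, z) * Dd ee1 (vc (n - 1 - i)) (x, y, z) + uc i (x, y, z) * Dd ee2 (Dd ee1 (vc (n - 1 - i))) (x, y, z) + Dd ee2 (vc i) (x, y, z) * Dd ee2 (vc (n - 1 - i)) (x, y, z) + vc i (x, y, z) * Dd ee2 (Dd ee2 (vc (n - 1 - i))) (x, y, z) + Dd ee2 (wc i) (x, y, z) * Dd ee3 (vc (n - 1 - i)) (x, y, z) + wc i (x, y, z) * Dd ee2 (Dd ee3 (vc (n - 1 - i))) (x, y, z)) + (Dd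 ee3 (uc i) (x, y, z) * Dd ee1 (wc (n - 1 - i)) (x, y, z) + uc i (x, y, z) * Dd ee3 (Dd ee1 (wc (n - 1 - i))) (x, y, z) + Dd ee3 (vc i) (x, y, z) * Dd ee2 (wc (n - 1 - i)) (x, y, z) + vc i (x, y, z) * Dd ee3 (Dd ee2 (wc (n - 1 - i))) (x, y, z) + Dd ee3 (wc i) (x, y, z) * Dd ee3 (wc (n - 1 - i)) (x, y, z) + wc i (x, y, z) * Dd ee3 (Dd ee3 (wc (n - 1 - i))) (x, y, z)))) = ∑ i ∈ Finset.range n, (Dd ee1 (uc i) (x, y, z) * Dd ee1 (uc (n - 1 - i)) (x, y, z) + Dd ee1 (vc i) (x, y, z) * Dd ee2 (uc (n - 1 - i)) (x, y, z) + Dd ee1 (wc i) (x, y, z) * Dd ee3 (uc (n - 1 - i)) (x, y, z) + Dd ee2 (uc i) (x, y, z) * Dd ee1 (vc (n - 1 - i)) (x, y, z) + Dd ee2 (vc i) (x, y, z) * Dd ee2 (vc (n - 1 - i)) (x, y, z) + Dd ee2 (wc i) (x, y, z) * Dd ee3 (vc (n - 1 - i)) (x, y, z) + Dd ee3 (uc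 i) (x, y, z) * Dd ee1 (wc (n - 1 - i)) (x, y, z) + Dd ee3 (vc i) (x, y, z) * Dd ee2 (wc (n - 1 - i)) (x, y, z) + Dd ee3 (wc i) (x, y, z) * Dd ee3 (wc (n - 1 - i)) (x, y, z)) :=
      Finset.sum_congr rfl hper
    have r4 : (∑ i ∈ Finset.range n, Dd ee2 (uc i) (x, y, z) * Dd ee1 (vc (n - 1 - i)) (x, y, z)) = ∑ i ∈ Finset.range n, Dd ee1 (vc i) (x, y, z) * Dd ee2 (uc (n - 1 - i)) (x, y, z) :=
      sum_reflect_mul n (fun i => Dd ee2 (uc i) (x, y, z)) (fun i => Dd ee1 (vc i) (x, y, z))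
    have r7 : (∑ i ∈ Finset.range n, Dd ee3 (uc i) (x, y, z) * Dd ee1 (wc (n - 1 - i)) (x, y, z)) = ∑ i ∈ Finset.range n, Dd ee1 (wc i) (x, y, z) * Dd ee3 (uc (n - 1 - i)) (x, y, z) :=
      sum_reflect_mul n (fun i => Dd ee3 (uc i) (x, y, z)) (fun i => Dd ee1 (wc i) (x, y, z))
    have r6 : (∑ i ∈ Finset.range n, Dd ee2 (wc i) (x, y, z) * Dd ee3 (vc (n - 1 - i)) (x, y, z)) = ∑ i ∈ Finset.range n, Dd ee3 (vc i) (x, y, z) * Dd ee2 (wc (n - 1 - i)) (x, y, z) :=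
      sum_reflect_mul n (fun i => Dd ee2 (wc i) (x, y, z)) (fun i => Dd ee3 (vc i) (x, y, z))
    have hconv : (∑ i ∈ Finset.range n, (Dd ee1 (uc i) (x, y, z) * Dd ee1 (uc (n - 1 - i)) (x, y, z) + uc i (x, y, z) * Dd ee1 (Dd ee1 (uc (n - 1 - i))) (x, y, z) + Dd ee1 (vc i) (x, y, z) * Dd ee2 (uc (n - 1 - i)) (x, y, z) + vc i (x, y, z) * Dd ee1 (Dd ee2 (uc (n - 1 - i))) (x, y, z) + Dd ee1 (wc i) (x, y, z) * Dd ee3 (uc (n - 1 - i)) (x, y, z) + wc i (x, y, z) * Dd ee1 (Dd ee3 (uc (n - 1 - i))) (x, y, z))) + (∑ i ∈ Finset.range n, (Dd ee2 (uc i) (x, y, z) * Dd ee1 (vc (n - 1 - i)) (x, y, z) + uc i (x, y, z) * Dd ee2 (Dd ee1 (vc (n - 1 - i))) (x, y, z) + Dd ee2 (vc i) (x, y, z) * Dd ee2 (vc (n - 1 - i)) (x, y, z) + vc i (x, y, z) * Dd ee2 (Dd ee2 (vc (n - 1 - i))) (x, y, z) + Dd ee2 (wc i) (x, y, z) * Dd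 ee3 (vc (n - 1 - i)) (x, y, z) + wc i (x, y, z) * Dd ee2 (Dd ee3 (vc (n - 1 - i))) (x, y, z))) + (∑ i ∈ Finset.range n, (Dd ee3 (uc i) (x, y, z) * Dd ee1 (wc (n - 1 - i)) (x, y, z) + uc i (x, y, z) * Dd ee3 (Dd ee1 (wc (n - 1 - i))) (x, y, z) + Dd ee3 (vc i) (x, y, z) * Dd ee2 (wc (n - 1 - i)) (x, y, z) + vc i (x, y, z) * Dd ee3 (Dd ee2 (wc (n - 1 - i))) (x, y, z) + Dd ee3 (wc i) (x, y, z) * Dd ee3 (wc (n - 1 - i)) (x, y, z) + wc i (x, y, z) * Dd ee3 (Dd ee3 (wc (n - 1 - i))) (x, y, z))) = (∑ i ∈ Finset.range n, Dd ee1 (uc i) (x, y, z) * Dd ee1 (uc (n - 1 - i)) (x, y, z)) + (∑ i ∈ Finset.range n, Dd ee2 (vc i) (x, y, z) * Dd ee2 (vc (n - 1 - i)) (x, y, z)) + (∑ i ∈ Finset.range n, Dd ee3 (wc i) (x, y, z) * Dd ee3 (wc (n - 1 - i)) (x, y, z)) + 2 * (∑ i ∈ Finset.range n, Dd ee1 (vc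 i) (x, y, z) * Dd ee2 (uc (n - 1 - i)) (x, y, z)) + 2 * (∑ i ∈ Finset.range n, Dd ee1 (wc i) (x, y, z) * Dd ee3 (uc (n - 1 - i)) (x, y, z)) + 2 * (∑ i ∈ Finset.range n, Dd ee3 (vc i) (x, y, z) * Dd ee2 (wc (n - 1 - i)) (x, y, z)) := by
      rw [hc0, hc1]
      simp only [Finset.sum_add_distrib]
      rw [r4, r7, r6]
      ring
    have hX : (ν * (Dd ee1 (Dd ee1 (Dd ee1 (uc (n - 1)))) (x, y, z) + Dd ee1 (Dd ee2 (Dd ee2 (uc (n - 1)))) (x, y, z) + Dd ee1 (Dd ee3 (Dd ee3 (uc (n - 1)))) (x, y, z)) + Dd ee1 (f₁c) (x, y, z) - (∑ i ∈ Finset.range n, (Dd ee1 (uc i) (x, y, z) * Dd ee1 (uc (n - 1 - i)) (x, y, z) + uc i (x, y, z) * Dd ee1 (Dd ee1 (uc (n - 1 - i))) (x, y, z) + Dd ee1 (vc i) (x, y, z) * Dd ee2 (uc (n - 1 - i)) (x, y, z) + vc i (x, y, z) * Dd ee1 (Dd ee2 (uc (n - 1 - i))) (x, y, z) + Dd ee1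 (wc i) (x, y, z) * Dd ee3 (uc (n - 1 - i)) (x, y, z) + wc i (x, y, z) * Dd ee1 (Dd ee3 (uc (n - 1 - i))) (x, y, z))) - Dd ee1 (Dd ee1 (pc)) (x, y, z)) + (ν * (Dd ee2 (Dd ee1 (Dd ee1 (vc (n - 1)))) (x, y, z) + Dd ee2 (Dd ee2 (Dd ee2 (vc (n - 1)))) (x, y, z) + Dd ee2 (Dd ee3 (Dd ee3 (vc (n - 1)))) (x, y, z)) + Dd ee2 (f₂c) (x, y, z) - (∑ i ∈ Finset.range n, (Dd ee2 (uc i) (x, y, z) * Dd ee1 (vc (n - 1 - i)) (x, y, z) + uc i (x, y, z) * Dd ee2 (Dd ee1 (vc (n - 1 - i))) (x, y, z) + Dd ee2 (vc i) (x, y, z) * Dd ee2 (vc (n - 1 - i)) (x, y, z) + vc i (x, y, z) * Dd ee2 (Dd ee2 (vc (n - 1 - i))) (x, y, z) + Dd ee2 (wc i) (x, y, z) * Dd ee3 (vc (n - 1 - i)) (x, y, z) + wc i (x, y, z) * Dd ee2 (Dd ee3 (vc (n - 1 - i))) (x, y, z))) - Dd ee2 (Dd ee2 (pc)) (x, y,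 z)) + (ν * (Dd ee3 (Dd ee1 (Dd ee1 (wc (n - 1)))) (x, y, z) + Dd ee3 (Dd ee2 (Dd ee2 (wc (n - 1)))) (x, y, z) + Dd ee3 (Dd ee3 (Dd ee3 (wc (n - 1)))) (x, y, z)) + Dd ee3 (f₃c) (x, y, z) - (∑ i ∈ Finset.range n, (Dd ee3 (uc i) (x, y, z) * Dd ee1 (wc (n - 1 - i)) (x, y, z) + uc i (x, y, z) * Dd ee3 (Dd ee1 (wc (n - 1 - i))) (x, y, z) + Dd ee3 (vc i) (x, y, z) * Dd ee2 (wc (n - 1 - i)) (x, y, z) + vc i (x, y, z) * Dd ee3 (Dd ee2 (wc (n - 1 - i))) (x, y, z) + Dd ee3 (wc i) (x, y, z) * Dd ee3 (wc (n - 1 - i)) (x, y, z) + wc i (x, y, z) * Dd ee3 (Dd ee3 (wc (n - 1 - i))) (x, y, z))) - Dd ee3 (Dd ee3 (pc)) (x, y, z)) = (Dd ee1 (f₁c) (x, y, z) + Dd ee2 (f₂c) (x, y, z) + Dd ee3 (f₃c) (x, y, z) - (∑ i ∈ Finset.range n, Dd ee1 (uc i) (x, y, z) * Dd ee1 (uc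 (n - 1 - i)) (x, y, z)) - (∑ i ∈ Finset.range n, Dd ee2 (vc i) (x, y, z) * Dd ee2 (vc (n - 1 - i)) (x, y, z)) - (∑ i ∈ Finset.range n, Dd ee3 (wc i) (x, y, z) * Dd ee3 (wc (n - 1 - i)) (x, y, z)) - 2 * (∑ i ∈ Finset.range n, Dd ee1 (vc i) (x, y, z) * Dd ee2 (uc (n - 1 - i)) (x, y, z)) - 2 * (∑ i ∈ Finset.range n, Dd ee1 (wc i) (x, y, z) * Dd ee3 (uc (n - 1 - i)) (x, y, z)) - 2 * (∑ i ∈ Finset.range n, Dd ee3 (vc i) (x, y, z) * Dd ee2 (wc (n - 1 - i)) (x, y, z))) - (Dd ee1 (Dd ee1 (pc)) (x, y, z) + Dd ee2 (Dd ee2 (pc)) (x, y, z) + Dd ee3 (Dd ee3 (pc)) (x, y, z)) := by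
      linear_combination ν * hnu0 - hconv
    rw [eq1, eq2, eq3, cancel_third (n : ℝ) hn0]
    exact hX
  have tgt : ∀ x y z : ℝ, (sxx pc x y z + syy pc x y z + szz pc x y z
            = sx f₁c x y z + sy f₂c x y z + sz f₃c x y z
              - ∑ i ∈ Finset.range n, sx (uc i) x y z * sx (uc (n - 1 - i)) x y z
              - ∑ i ∈ Finset.range n, sy (vc i) x y z * sy (vc (n - 1 - i)) x y z
              - ∑ i ∈ Finset.range n, sz (wc i) x y z * sz (wc (n - 1 - i)) x y z
              - 2 * ∑ i ∈ Finset.range n, sx (vc i) x y z * sy (uc (n - 1 - i)) x y z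
              - 2 * ∑ i ∈ Finset.range n, sx (wc i) x y z * sz (uc (n - 1 - i)) x y z
              - 2 * ∑ i ∈ Finset.range n, sz (vc i) x y z * sy (wc (n - 1 - i)) x y z) ↔ (Dd ee1 (Dd ee1 (pc)) (x, y, z) + Dd ee2 (Dd ee2 (pc)) (x, y, z) + Dd ee3 (Dd ee3 (pc)) (x, y, z) = Dd ee1 (f₁c) (x, y, z) + Dd ee2 (f₂c) (x, y, z) + Dd ee3 (f₃c) (x, y, z) - (∑ i ∈ Finset.range n, Dd ee1 (uc i) (x, y, z) * Dd ee1 (uc (n - 1 - i)) (x, y, z)) - (∑ i ∈ Finset.range n, Dd ee2 (vc i) (x, y, z) * Dd ee2 (vc (n - 1 - i)) (x, y, z)) - (∑ i ∈ Finset.range n, Dd ee3 (wc i) (x, y, z) * Dd ee3 (wc (n - 1 - i)) (x, y, z)) - 2 * (∑ i ∈ Finset.range n, Dd ee1 (vc i) (x, y, z) * Dd ee2 (uc (n - 1 - i)) (x, y, z)) - 2 * (∑ i ∈ Finset.range n, Dd ee1 (wc i) (x, y, z) * Dd ee3 (uc (n - 1 - i)) (x, y, z)) - 2 * (∑ i ∈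 Finset.range n, Dd ee3 (vc i) (x, y, z) * Dd ee2 (wc (n - 1 - i)) (x, y, z))) := by
    intro x y z
    have ts1 : (∑ i ∈ Finset.range n, sx (uc i) x y z * sx (uc (n - 1 - i)) x y z) = ∑ i ∈ Finset.range n, Dd ee1 (uc i) (x, y, z) * Dd ee1 (uc (n - 1 - i)) (x, y, z) :=
      Finset.sum_congr rfl fun i hi => by
        rw [sx_eq _ ((hu i (by rw [Finset.mem_range] at hi; omega)).differentiable (by simp)) x y z,
          sx_eq _ ((hu _ (Nat.sub_le _ _)).differentiable (by simp)) x y z]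
    have ts2 : (∑ i ∈ Finset.range n, sy (vc i) x y z * sy (vc (n - 1 - i)) x y z) = ∑ i ∈ Finset.range n, Dd ee2 (vc i) (x, y, z) * Dd ee2 (vc (n - 1 - i)) (x, y, z) :=
      Finset.sum_congr rfl fun i hi => by
        rw [sy_eq _ ((hv i (by rw [Finset.mem_range] at hi; omega)).differentiable (by simp)) x y z,
          sy_eq _ ((hv _ (Nat.sub_le _ _)).differentiable (by simp)) x y z]
    have ts3 : (∑ i ∈ Finset.range n, sz (wc i) x y z * sz (wc (n - 1 - i)) x y z) = ∑ i ∈ Finset.range n, Dd ee3 (wc i) (x, y, z) * Dd ee3 (wc (n - 1 - i)) (x, y, z) :=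
      Finset.sum_congr rfl fun i hi => by
        rw [sz_eq _ ((hw i (by rw [Finset.mem_range] at hi; omega)).differentiable (by simp)) x y z,
          sz_eq _ ((hw _ (Nat.sub_le _ _)).differentiable (by simp)) x y z]
    have ts4 : (∑ i ∈ Finset.range n, sx (vc i) x y z * sy (uc (n - 1 - i)) x y z) = ∑ i ∈ Finset.range n, Dd ee1 (vc i) (x, y, z) * Dd ee2 (uc (n - 1 - i)) (x, y, z) :=
      Finset.sum_congr rfl fun i hi => by
        rw [sx_eq _ ((hv i (by rw [Finset.mem_range] at hi; omega)).differentiable (by simp)) x y z,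
          sy_eq _ ((hu _ (Nat.sub_le _ _)).differentiable (by simp)) x y z]
    have ts5 : (∑ i ∈ Finset.range n, sx (wc i) x y z * sz (uc (n - 1 - i)) x y z) = ∑ i ∈ Finset.range n, Dd ee1 (wc i) (x, y, z) * Dd ee3 (uc (n - 1 - i)) (x, y, z) :=
      Finset.sum_congr rfl fun i hi => by
        rw [sx_eq _ ((hw i (by rw [Finset.mem_range] at hi; omega)).differentiable (by simp)) x y z,
          sz_eq _ ((hu _ (Nat.sub_le _ _)).differentiable (by simp)) x y z]
    have ts6 : (∑ i ∈ Finset.range n, sz (vc i) x y z * sy (wc (n - 1 - i)) x y z) = ∑ i ∈ Finset.range n, Dd ee3 (vc i) (x, y, z) * Dd ee2 (wc (n - 1 - i)) (x, y, z) :=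
      Finset.sum_congr rfl fun i hi => by
        rw [sz_eq _ ((hv i (by rw [Finset.mem_range] at hi; omega)).differentiable (by simp)) x y z,
          sy_eq _ ((hw _ (Nat.sub_le _ _)).differentiable (by simp)) x y z]
    rw [sxx_eq pc hp, syy_eq pc hp, szz_eq pc hp, sx_eq f₁c (hf₁.differentiable (by simp)),
      sy_eq f₂c (hf₂.differentiable (by simp)), sz_eq f₃c (hf₃.differentiable (by simp)),
      ts1, ts2, ts3, ts4, ts5, ts6]
  constructor
  · intro h x y z
    rw [tgt x y z]
    have hm := main x y z
    rw [h x y z, mul_zero] at hm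
    linarith [hm]
  · intro h x y z
    have hq := (tgt x y z).mp (h x y z)
    have hm := main x y z
    have h0 : (n : ℝ) * (sx uN x y z + sy vN x y z + sz wN x y z) = 0 := by
      rw [hm]; linarith [hq]
    exact (mul_eq_zero.mp h0).resolve_left hn0
end

section
/- Let ν be a real number, T > 0, and let (uᵢ)_{i≥0}, (vᵢ)_{i≥0}, (wᵢ)_{i≥0}, (pᵢ)_{i≥0}, (f_{1,i})_{i≥0}, (f_{2,i})_{i≥0}, (f_{3,i})_{i≥0} be sequences of smooth functions ℝ³ → ℝ satisfying, for every n ≥ 1, the recursion n·uₙ = ν Δu_{n−1} + f_{1,n−1} − ∑_{i=0}^{n−1}(uᵢ ∂u_{n−1−i}/∂x + vᵢ ∂u_{n−1−i}/∂y + wᵢ ∂u_{n−1−i}/∂z) − ∂p_{n−1}/∂x, together with the analogous recursions for vₙ (with f_{2,n−1} and ∂p_{n−1}/∂y) and wₙ (with f_{3,n−1} and ∂p_{n−1}/∂z). Suppose u, v, w, p, f₁, f₂, f₃ : ℝ³ × (−T, T) → ℝ are smooth functions such that for every (x,y,z,t) ∈ ℝ³ × (−T, T): u(x,y,z,t) =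 ∑_{i=0}^∞ uᵢ(x,y,z) tⁱ with the series converging, and moreover the time derivative ∂u/∂t, each first spatial partial derivative, and each second spatial partial derivative of u equal the corresponding termwise-differentiated series ∑_{i=1}^∞ i uᵢ t^{i−1}, ∑_{i=0}^∞ (∂uᵢ/∂x) tⁱ, etc., all converging; assume the same for v, w, p, and assume f_j(x,y,z,t) = ∑_{i=0}^∞ f_{j,i}(x,y,z) tⁱ converges for j = 1, 2, 3. Then (u, v, w, p) satisfies the three momentum equations ∂u/∂t + u ∂u/∂x + v ∂u/∂y + w ∂u/∂z = ν Δu − ∂p/∂x + f₁, ∂v/∂t + u ∂v/∂x + v ∂v/∂y + w ∂v/∂z = ν Δv − ∂p/∂y + f₂, and ∂w/∂t + u ∂w/∂x + v ∂w/∂y + w ∂w/∂z = ν Δw − ∂p/∂z + f₃ at every point of ℝ³ × (−T, T). -/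
open Finset

/-- partial derivative in t of a function on ℝ³ × ℝ. -/
noncomputable def pt (g : ℝ × ℝ × ℝ × ℝ → ℝ) (x y z t : ℝ) : ℝ :=
  deriv (fun s => g (x, y, z, s)) t

/-- partial derivative in x of a function on ℝ³ × ℝ. -/
noncomputable def px (g : ℝ × ℝ × ℝ × ℝ → ℝ) (x y z t : ℝ) : ℝ :=
  deriv (fun a => g (a, y, z, t)) x

/-- partial derivative in y of a function on ℝ³ × ℝ. -/
noncomputable def py (g : ℝ × ℝ × ℝ × ℝ → ℝ) (x y z t : ℝ) : ℝ :=
  deriv (fun a => g (x, a, z, t)) y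

/-- partial derivative in z of a function on ℝ³ × ℝ. -/
noncomputable def pz (g : ℝ × ℝ × ℝ × ℝ → ℝ) (x y z t : ℝ) : ℝ :=
  deriv (fun a => g (x, y, a, t)) z

/-- second partial derivative in x of a function on ℝ³ × ℝ. -/
noncomputable def pxx (g : ℝ × ℝ × ℝ × ℝ → ℝ) (x y z t : ℝ) : ℝ :=
  deriv (fun a => px g a y z t) x

/-- second partial derivative in y of a function on ℝ³ × ℝ. -/
noncomputable def pyy (g : ℝ × ℝ × ℝ × ℝ → ℝ) (x y z t : ℝ) : ℝ :=
  deriv (fun a => py g x a z t) y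

/-- second partial derivative in z of a function on ℝ³ × ℝ. -/
noncomputable def pzz (g : ℝ × ℝ × ℝ × ℝ → ℝ) (x y z t : ℝ) : ℝ :=
  deriv (fun a => pz g x y a t) z

private lemma abs_summable_aux {T : ℝ} (c : ℕ → ℝ) {t : ℝ} (ht : t ∈ Set.Ioo (-T) T)
    (h : ∀ s : ℝ, s ∈ Set.Ioo (-T) T → Summable fun i => c i * s ^ i) :
    Summable fun i => ‖c i * t ^ i‖ := by
  have h0 : |t| < T := abs_lt.2 ⟨ht.1, ht.2⟩
  set r : ℝ := (|t| + T) / 2 with hrdef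
  have hr1 : |t| < r := by rw [hrdef]; linarith
  have hr2 : r < T := by rw [hrdef]; linarith
  have hr0 : 0 < r := lt_of_le_of_lt (abs_nonneg t) hr1
  have hsr : Summable fun i => c i * r ^ i := h r ⟨by linarith, hr2⟩
  obtain ⟨C, hC⟩ := (hsr.tendsto_atTop_zero.norm).bddAbove_range
  have hq0 : (0:ℝ) ≤ |t| / r := div_nonneg (abs_nonneg t) hr0.le
  have hq1 : |t| / r < 1 := (div_lt_one hr0).2 hr1
  refine Summable.of_nonneg_of_le (fun i => norm_nonneg _)
    (fun i => ?_) ((summable_geometric_of_lt_one hq0 hq1).mul_left C)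
  have he : ‖c i * t ^ i‖ = ‖c i * r ^ i‖ * (|t| / r) ^ i := by
    have hrpow : (0:ℝ) < r ^ i := pow_pos hr0 i
    simp only [norm_mul, Real.norm_eq_abs, abs_pow, abs_of_pos hr0, div_pow]
    field_simp
  rw [he]
  exact mul_le_mul_of_nonneg_right (hC ⟨i, rfl⟩) (pow_nonneg hq0 i)

private lemma key_aux (ν t : ℝ)
    (a b c e dx dy dz dxx dyy dzz pcd fc : ℕ → ℝ)
    (At Ax Ay Az Axx Ayy Azz Uv Vv Wv Pd Fv : ℝ)
    (hrec : ∀ n : ℕ, ((n : ℝ) + 1) * e (n + 1)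
      = ν * (dxx n + dyy n + dzz n) + fc n
        - ∑ i ∈ Finset.range (n + 1),
            (a i * dx (n - i) + b i * dy (n - i) + c i * dz (n - i))
        - pcd n)
    (hAt : HasSum (fun i : ℕ => (i : ℝ) * e i * t ^ (i - 1)) At)
    (hAx : HasSum (fun i : ℕ => dx i * t ^ i) Ax)
    (hAy : HasSum (fun i : ℕ => dy i * t ^ i) Ay)
    (hAz : HasSum (fun i : ℕ => dz i * t ^ i) Az)
    (hAxx : HasSum (fun i : ℕ => dxx i * t ^ i) Axx)
    (hAyy : HasSum (fun i : ℕ => dyy i * t ^ i) Ayy)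
    (hAzz : HasSum (fun i : ℕ => dzz i * t ^ i) Azz)
    (hU : HasSum (fun i : ℕ => a i * t ^ i) Uv)
    (hV : HasSum (fun i : ℕ => b i * t ^ i) Vv)
    (hW : HasSum (fun i : ℕ => c i * t ^ i) Wv)
    (hP : HasSum (fun i : ℕ => pcd i * t ^ i) Pd)
    (hF : HasSum (fun i : ℕ => fc i * t ^ i) Fv)
    (na : Summable fun i => ‖a i * t ^ i‖) (nb : Summable fun i => ‖b i * t ^ i‖)
    (nc : Summable fun i => ‖c i * t ^ i‖)
    (ndx : Summable fun i => ‖dx i * t ^ i‖) (ndy : Summable fun i => ‖dy i * t ^ i‖)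
    (ndz : Summable fun i => ‖dz i * t ^ i‖) :
    At + Uv * Ax + Vv * Ay + Wv * Az = ν * (Axx + Ayy + Azz) - Pd + Fv := by
  have hAt' : HasSum (fun n : ℕ => ((n : ℝ) + 1) * e (n + 1) * t ^ n) At := by
    have h0 := (hasSum_nat_add_iff' (f := fun i : ℕ => (i : ℝ) * e i * t ^ (i - 1)) 1).2 hAt
    simp only [Finset.sum_range_one, Nat.cast_zero, zero_mul, sub_zero, Nat.cast_add,
      Nat.cast_one, Nat.add_sub_cancel] at h0
    exact h0
  have hUAx : HasSum (fun n : ℕ => ∑ k ∈ Finset.range (n + 1),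
      (a k * t ^ k) * (dx (n - k) * t ^ (n - k))) (Uv * Ax) := by
    have h := hasSum_sum_range_mul_of_summable_norm na ndx
    rwa [hU.tsum_eq, hAx.tsum_eq] at h
  have hVAy : HasSum (fun n : ℕ => ∑ k ∈ Finset.range (n + 1),
      (b k * t ^ k) * (dy (n - k) * t ^ (n - k))) (Vv * Ay) := by
    have h := hasSum_sum_range_mul_of_summable_norm nb ndy
    rwa [hV.tsum_eq, hAy.tsum_eq] at h
  have hWAz : HasSum (fun n : ℕ => ∑ k ∈ Finset.range (n + 1),
      (c k * t ^ k) * (dz (n - k) * t ^ (n - k))) (Wv * Az) := by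
    have h := hasSum_sum_range_mul_of_summable_norm nc ndz
    rwa [hW.tsum_eq, hAz.tsum_eq] at h
  have hsum := ((hAt'.add hUAx).add hVAy).add hWAz
  have hrhs : HasSum (fun n : ℕ =>
      (ν * (dxx n + dyy n + dzz n) + fc n - pcd n) * t ^ n)
      (ν * (Axx + Ayy + Azz) - Pd + Fv) := by
    have h1 := (((hAxx.add hAyy).add hAzz).mul_left ν)
    have heq : (fun n : ℕ => (ν * (dxx n + dyy n + dzz n) + fc n - pcd n) * t ^ n)
        = fun n : ℕ => ν * (dxx n * t ^ n + dyy n * t ^ n + dzz n * t ^ n)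
            - pcd n * t ^ n + fc n * t ^ n := by
      funext n; ring
    rw [heq]
    exact (h1.sub hP).add hF
  have hfun : (fun n : ℕ => ((n : ℝ) + 1) * e (n + 1) * t ^ n
      + ∑ k ∈ Finset.range (n + 1), (a k * t ^ k) * (dx (n - k) * t ^ (n - k))
      + ∑ k ∈ Finset.range (n + 1), (b k * t ^ k) * (dy (n - k) * t ^ (n - k))
      + ∑ k ∈ Finset.range (n + 1), (c k * t ^ k) * (dz (n - k) * t ^ (n - k)))
      = fun n : ℕ => (ν * (dxx n + dyy n + dzz n) + fc n - pcd n) * t ^ n := by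
    funext n
    have hs : ∀ g h : ℕ → ℝ,
        ∑ k ∈ Finset.range (n + 1), (g k * t ^ k) * (h (n - k) * t ^ (n - k))
        = (∑ k ∈ Finset.range (n + 1), g k * h (n - k)) * t ^ n := by
      intro g h
      rw [Finset.sum_mul]
      refine Finset.sum_congr rfl fun k hk => ?_
      have hk' : k ≤ n := Nat.lt_succ_iff.1 (Finset.mem_range.1 hk)
      have ht : t ^ k * t ^ (n - k) = t ^ n := by
        rw [← pow_add, Nat.add_sub_cancel' hk']
      rw [← ht]; ring
    rw [hs a dx, hs b dy, hs c dz, hrec n, Finset.sum_add_distrib, Finset.sum_add_distrib]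
    ring
  rw [hfun] at hsum
  exact hsum.unique hrhs

/-- if the coefficient recursions hold and the time power series together with
their termwise derivatives converge to the corresponding functions and derivatives, then the
assembled functions solve the three momentum equations on ℝ³ × (−T, T). -/
theorem series_solution_satisfies_momentum_equations
    (ν T : ℝ) (hT : 0 < T)
    (uc vc wc pc f₁c f₂c f₃c : ℕ → ℝ × ℝ × ℝ → ℝ)
    (huc : ∀ i, ContDiff ℝ (⊤ : ℕ∞) (uc i)) (hvc : ∀ i, ContDiff ℝ (⊤ : ℕ∞) (vc i))
    (hwc : ∀ i, ContDiff ℝ (⊤ : ℕ∞) (wc i)) (hpc : ∀ i, ContDiff ℝ (⊤ : ℕ∞) (pc i))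
    (hf₁c : ∀ i, ContDiff ℝ (⊤ : ℕ∞) (f₁c i)) (hf₂c : ∀ i, ContDiff ℝ (⊤ : ℕ∞) (f₂c i))
    (hf₃c : ∀ i, ContDiff ℝ (⊤ : ℕ∞) (f₃c i))
    (hrecu : ∀ n : ℕ, 1 ≤ n → ∀ x y z : ℝ,
      (n : ℝ) * uc n (x, y, z)
        = ν * (sxx (uc (n - 1)) x y z + syy (uc (n - 1)) x y z + szz (uc (n - 1)) x y z)
          + f₁c (n - 1) (x, y, z)
          - ∑ i ∈ Finset.range n,
              (uc i (x, y, z) * sx (uc (n - 1 - i)) x y z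
                + vc i (x, y, z) * sy (uc (n - 1 - i)) x y z
                + wc i (x, y, z) * sz (uc (n - 1 - i)) x y z)
          - sx (pc (n - 1)) x y z)
    (hrecv : ∀ n : ℕ, 1 ≤ n → ∀ x y z : ℝ,
      (n : ℝ) * vc n (x, y, z)
        = ν * (sxx (vc (n - 1)) x y z + syy (vc (n - 1)) x y z + szz (vc (n - 1)) x y z)
          + f₂c (n - 1) (x, y, z)
          - ∑ i ∈ Finset.range n,
              (uc i (x, y, z) * sx (vc (n - 1 - i)) x y z
                + vc i (x, y, z) * sy (vc (n - 1 - i)) x y z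
                + wc i (x, y, z) * sz (vc (n - 1 - i)) x y z)
          - sy (pc (n - 1)) x y z)
    (hrecw : ∀ n : ℕ, 1 ≤ n → ∀ x y z : ℝ,
      (n : ℝ) * wc n (x, y, z)
        = ν * (sxx (wc (n - 1)) x y z + syy (wc (n - 1)) x y z + szz (wc (n - 1)) x y z)
          + f₃c (n - 1) (x, y, z)
          - ∑ i ∈ Finset.range n,
              (uc i (x, y, z) * sx (wc (n - 1 - i)) x y z
                + vc i (x, y, z) * sy (wc (n - 1 - i)) x y z
                + wc i (x, y, z) * sz (wc (n - 1 - i)) x y z)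
          - sz (pc (n - 1)) x y z)
    (u v w p f₁ f₂ f₃ : ℝ × ℝ × ℝ × ℝ → ℝ)
    (hu : ContDiffOn ℝ (⊤ : ℕ∞) u {q : ℝ × ℝ × ℝ × ℝ | q.2.2.2 ∈ Set.Ioo (-T) T})
    (hv : ContDiffOn ℝ (⊤ : ℕ∞) v {q : ℝ × ℝ × ℝ × ℝ | q.2.2.2 ∈ Set.Ioo (-T) T})
    (hw : ContDiffOn ℝ (⊤ : ℕ∞) w {q : ℝ × ℝ × ℝ × ℝ | q.2.2.2 ∈ Set.Ioo (-T) T})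
    (hp : ContDiffOn ℝ (⊤ : ℕ∞) p {q : ℝ × ℝ × ℝ × ℝ | q.2.2.2 ∈ Set.Ioo (-T) T})
    (hf₁ : ContDiffOn ℝ (⊤ : ℕ∞) f₁ {q : ℝ × ℝ × ℝ × ℝ | q.2.2.2 ∈ Set.Ioo (-T) T})
    (hf₂ : ContDiffOn ℝ (⊤ : ℕ∞) f₂ {q : ℝ × ℝ × ℝ × ℝ | q.2.2.2 ∈ Set.Ioo (-T) T})
    (hf₃ : ContDiffOn ℝ (⊤ : ℕ∞) f₃ {q : ℝ × ℝ × ℝ × ℝ | q.2.2.2 ∈ Set.Ioo (-T) T})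
    -- convergence of the series for u and of its termwise-differentiated series
    (hsu : ∀ x y z t : ℝ, t ∈ Set.Ioo (-T) T →
      HasSum (fun i : ℕ => uc i (x, y, z) * t ^ i) (u (x, y, z, t))
      ∧ HasSum (fun i : ℕ => (i : ℝ) * uc i (x, y, z) * t ^ (i - 1)) (pt u x y z t)
      ∧ HasSum (fun i : ℕ => sx (uc i) x y z * t ^ i) (px u x y z t)
      ∧ HasSum (fun i : ℕ => sy (uc i) x y z * t ^ i) (py u x y z t)
      ∧ HasSum (fun i : ℕ => sz (uc i) x y z * t ^ i) (pz u x y z t)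
      ∧ HasSum (fun i : ℕ => sxx (uc i) x y z * t ^ i) (pxx u x y z t)
      ∧ HasSum (fun i : ℕ => syy (uc i) x y z * t ^ i) (pyy u x y z t)
      ∧ HasSum (fun i : ℕ => szz (uc i) x y z * t ^ i) (pzz u x y z t))
    -- the same for v
    (hsv : ∀ x y z t : ℝ, t ∈ Set.Ioo (-T) T →
      HasSum (fun i : ℕ => vc i (x, y, z) * t ^ i) (v (x, y, z, t))
      ∧ HasSum (fun i : ℕ => (i : ℝ) * vc i (x, y, z) * t ^ (i - 1)) (pt v x y z t)
      ∧ HasSum (fun i : ℕ => sx (vc i) x y z * t ^ i) (px v x y z t)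
      ∧ HasSum (fun i : ℕ => sy (vc i) x y z * t ^ i) (py v x y z t)
      ∧ HasSum (fun i : ℕ => sz (vc i) x y z * t ^ i) (pz v x y z t)
      ∧ HasSum (fun i : ℕ => sxx (vc i) x y z * t ^ i) (pxx v x y z t)
      ∧ HasSum (fun i : ℕ => syy (vc i) x y z * t ^ i) (pyy v x y z t)
      ∧ HasSum (fun i : ℕ => szz (vc i) x y z * t ^ i) (pzz v x y z t))
    -- the same for w
    (hsw : ∀ x y z t : ℝ, t ∈ Set.Ioo (-T) T →
      HasSum (fun i : ℕ => wc i (x, y, z) * t ^ i) (w (x, y, z, t))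
      ∧ HasSum (fun i : ℕ => (i : ℝ) * wc i (x, y, z) * t ^ (i - 1)) (pt w x y z t)
      ∧ HasSum (fun i : ℕ => sx (wc i) x y z * t ^ i) (px w x y z t)
      ∧ HasSum (fun i : ℕ => sy (wc i) x y z * t ^ i) (py w x y z t)
      ∧ HasSum (fun i : ℕ => sz (wc i) x y z * t ^ i) (pz w x y z t)
      ∧ HasSum (fun i : ℕ => sxx (wc i) x y z * t ^ i) (pxx w x y z t)
      ∧ HasSum (fun i : ℕ => syy (wc i) x y z * t ^ i) (pyy w x y z t)
      ∧ HasSum (fun i : ℕ => szz (wc i) x y z * t ^ i) (pzz w x y z t))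
    -- the same for p
    (hsp : ∀ x y z t : ℝ, t ∈ Set.Ioo (-T) T →
      HasSum (fun i : ℕ => pc i (x, y, z) * t ^ i) (p (x, y, z, t))
      ∧ HasSum (fun i : ℕ => (i : ℝ) * pc i (x, y, z) * t ^ (i - 1)) (pt p x y z t)
      ∧ HasSum (fun i : ℕ => sx (pc i) x y z * t ^ i) (px p x y z t)
      ∧ HasSum (fun i : ℕ => sy (pc i) x y z * t ^ i) (py p x y z t)
      ∧ HasSum (fun i : ℕ => sz (pc i) x y z * t ^ i) (pz p x y z t)
      ∧ HasSum (fun i : ℕ => sxx (pc i) x y z * t ^ i) (pxx p x y z t)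
      ∧ HasSum (fun i : ℕ => syy (pc i) x y z * t ^ i) (pyy p x y z t)
      ∧ HasSum (fun i : ℕ => szz (pc i) x y z * t ^ i) (pzz p x y z t))
    -- convergence of the series for the external forces
    (hsf₁ : ∀ x y z t : ℝ, t ∈ Set.Ioo (-T) T →
      HasSum (fun i : ℕ => f₁c i (x, y, z) * t ^ i) (f₁ (x, y, z, t)))
    (hsf₂ : ∀ x y z t : ℝ, t ∈ Set.Ioo (-T) T →
      HasSum (fun i : ℕ => f₂c i (x, y, z) * t ^ i) (f₂ (x, y, z, t)))
    (hsf₃ : ∀ x y z t : ℝ, t ∈ Set.Ioo (-T) T →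
      HasSum (fun i : ℕ => f₃c i (x, y, z) * t ^ i) (f₃ (x, y, z, t))) :
    ∀ x y z t : ℝ, t ∈ Set.Ioo (-T) T →
      (pt u x y z t + u (x, y, z, t) * px u x y z t + v (x, y, z, t) * py u x y z t
          + w (x, y, z, t) * pz u x y z t
        = ν * (pxx u x y z t + pyy u x y z t + pzz u x y z t)
          - px p x y z t + f₁ (x, y, z, t))
      ∧ (pt v x y z t + u (x, y, z, t) * px v x y z t + v (x, y, z, t) * py v x y z t
          + w (x, y, z, t) * pz v x y z t
        = ν * (pxx v x y z t + pyy v x y z t + pzz v x y z t)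
          - py p x y z t + f₂ (x, y, z, t))
      ∧ (pt w x y z t + u (x, y, z, t) * px w x y z t + v (x, y, z, t) * py w x y z t
          + w (x, y, z, t) * pz w x y z t
        = ν * (pxx w x y z t + pyy w x y z t + pzz w x y z t)
          - pz p x y z t + f₃ (x, y, z, t)) := by
  intro x y z t ht
  obtain ⟨su0, su1, su2, su3, su4, su5, su6, su7⟩ := hsu x y z t ht
  obtain ⟨sv0, sv1, sv2, sv3, sv4, sv5, sv6, sv7⟩ := hsv x y z t ht
  obtain ⟨sw0, sw1, sw2, sw3, sw4, sw5, sw6, sw7⟩ := hsw x y z t ht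
  obtain ⟨sp0, sp1, sp2, sp3, sp4, sp5, sp6, sp7⟩ := hsp x y z t ht
  have na : Summable fun i => ‖uc i (x, y, z) * t ^ i‖ :=
    abs_summable_aux _ ht fun s hs => ((hsu x y z s hs).1).summable
  have nb : Summable fun i => ‖vc i (x, y, z) * t ^ i‖ :=
    abs_summable_aux _ ht fun s hs => ((hsv x y z s hs).1).summable
  have nc : Summable fun i => ‖wc i (x, y, z) * t ^ i‖ :=
    abs_summable_aux _ ht fun s hs => ((hsw x y z s hs).1).summable
  have nux : Summable fun i => ‖sx (uc i) x y z * t ^ i‖ :=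
    abs_summable_aux _ ht fun s hs => ((hsu x y z s hs).2.2.1).summable
  have nuy : Summable fun i => ‖sy (uc i) x y z * t ^ i‖ :=
    abs_summable_aux _ ht fun s hs => ((hsu x y z s hs).2.2.2.1).summable
  have nuz : Summable fun i => ‖sz (uc i) x y z * t ^ i‖ :=
    abs_summable_aux _ ht fun s hs => ((hsu x y z s hs).2.2.2.2.1).summable
  have nvx : Summable fun i => ‖sx (vc i) x y z * t ^ i‖ :=
    abs_summable_aux _ ht fun s hs => ((hsv x y z s hs).2.2.1).summable
  have nvy : Summable fun i => ‖sy (vc i) x y z * t ^ i‖ :=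
    abs_summable_aux _ ht fun s hs => ((hsv x y z s hs).2.2.2.1).summable
  have nvz : Summable fun i => ‖sz (vc i) x y z * t ^ i‖ :=
    abs_summable_aux _ ht fun s hs => ((hsv x y z s hs).2.2.2.2.1).summable
  have nwx : Summable fun i => ‖sx (wc i) x y z * t ^ i‖ :=
    abs_summable_aux _ ht fun s hs => ((hsw x y z s hs).2.2.1).summable
  have nwy : Summable fun i => ‖sy (wc i) x y z * t ^ i‖ :=
    abs_summable_aux _ ht fun s hs => ((hsw x y z s hs).2.2.2.1).summable
  have nwz : Summable fun i => ‖sz (wc i) x y z * t ^ i‖ :=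
    abs_summable_aux _ ht fun s hs => ((hsw x y z s hs).2.2.2.2.1).summable
  refine ⟨?_, ?_, ?_⟩
  · refine key_aux ν t (fun i => uc i (x, y, z)) (fun i => vc i (x, y, z))
      (fun i => wc i (x, y, z)) (fun i => uc i (x, y, z))
      (fun i => sx (uc i) x y z) (fun i => sy (uc i) x y z) (fun i => sz (uc i) x y z)
      (fun i => sxx (uc i) x y z) (fun i => syy (uc i) x y z) (fun i => szz (uc i) x y z)
      (fun i => sx (pc i) x y z) (fun i => f₁c i (x, y, z))
      _ _ _ _ _ _ _ _ _ _ _ _ ?_ su1 su2 su3 su4 su5 su6 su7 su0 sv0 sw0 sp2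
      (hsf₁ x y z t ht) na nb nc nux nuy nuz
    intro n
    have h := hrecu (n + 1) (Nat.le_add_left 1 n) x y z
    push_cast [Nat.add_sub_cancel] at h
    exact h
  · refine key_aux ν t (fun i => uc i (x, y, z)) (fun i => vc i (x, y, z))
      (fun i => wc i (x, y, z)) (fun i => vc i (x, y, z))
      (fun i => sx (vc i) x y z) (fun i => sy (vc i) x y z) (fun i => sz (vc i) x y z)
      (fun i => sxx (vc i) x y z) (fun i => syy (vc i) x y z) (fun i => szz (vc i) x y z)
      (fun i => sy (pc i) x y z) (fun i => f₂c i (x, y, z))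
      _ _ _ _ _ _ _ _ _ _ _ _ ?_ sv1 sv2 sv3 sv4 sv5 sv6 sv7 su0 sv0 sw0 sp3
      (hsf₂ x y z t ht) na nb nc nvx nvy nvz
    intro n
    have h := hrecv (n + 1) (Nat.le_add_left 1 n) x y z
    push_cast [Nat.add_sub_cancel] at h
    exact h
  · refine key_aux ν t (fun i => uc i (x, y, z)) (fun i => vc i (x, y, z))
      (fun i => wc i (x, y, z)) (fun i => wc i (x, y, z))
      (fun i => sx (wc i) x y z) (fun i => sy (wc i) x y z) (fun i => sz (wc i) x y z)
      (fun i => sxx (wc i) x y z) (fun i => syy (wc i) x y z) (fun i => szz (wc i) x y z)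
      (fun i => sz (pc i) x y z) (fun i => f₃c i (x, y, z))
      _ _ _ _ _ _ _ _ _ _ _ _ ?_ sw1 sw2 sw3 sw4 sw5 sw6 sw7 su0 sv0 sw0 sp4
      (hsf₃ x y z t ht) na nb nc nwx nwy nwz
    intro n
    have h := hrecw (n + 1) (Nat.le_add_left 1 n) x y z
    push_cast [Nat.add_sub_cancel] at h
    exact h
end
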